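/- arXiv:2508.10336 — 7 statements merged into one kernel-verified Lean document; each statement's English description precedes it below -/
import Mathlib

section
/- Let (γ_j)_{j≥1} be a positive sequence, α ∈ (0,1), B > 0, and let (q_t)_{t≥1} be a real sequence with q_1 ∈ [0,B] defined recursively by q_{t+1} = q_t + γ_{J(t)}·(r_t − α)·S_t, where S_t ∈ {0,1} is arbitrary, J(t) = 1 + Σ_{i<t} S_i, and the 'reaction' r_t ∈ [0,1] satisfies: r_t = 1 whenever q_t < 0, and whenever q_t > B either S_t = 0 or r_t = 0. Then for all t ≥ 1, q_t ∈ [−α·max_{1≤j≤J(t)} γ_j, B + (1−α)·max_{1≤j≤J(t)} γ_j]. -/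
/-!
Below `0` the reaction is `1`, so a selection can only raise the threshold; at or above `0` a step
lowers it by at most `α γ`. Symmetrically, above `B` a selected step lowers the threshold, and at or
below `B` it raises it by at most `(1 - α) γ`. So the band
`[-α M, B + (1 - α) M]` is invariant once `M` dominates the steps used so far, and it widens with `M`.
-/

open Finset

/-- Number of selections before time `t` (plus one): `J(t) = 1 + ∑_{i<t} S_i`,
with time starting at `1`. -/
def Jsel (S : ℕ → ℕ) (t : ℕ) : ℕ := 1 + ∑ i ∈ Finset.Ico 1 t, S i

/-- `max_{1 ≤ j ≤ J} γ_j` (equal to `γ 1` if `J = 0`, but we always use it with `J ≥ 1`). -/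
noncomputable def maxStep (γ : ℕ → ℝ) (J : ℕ) : ℝ :=
  (insert 1 (Finset.Icc 1 J)).sup' (Finset.insert_nonempty _ _) γ

lemma one_le_Jsel (S : ℕ → ℕ) (t : ℕ) : 1 ≤ Jsel S t :=
  Nat.le_add_right 1 _

lemma Jsel_succ (S : ℕ → ℕ) {t : ℕ} (ht : 1 ≤ t) : Jsel S (t + 1) = Jsel S t + S t := by
  rw [Jsel, Jsel, Finset.sum_Ico_succ_top ht, add_assoc]

lemma apply_one_le_maxStep (γ : ℕ → ℝ) (J : ℕ) : γ 1 ≤ maxStep γ J :=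
  Finset.le_sup' γ (Finset.mem_insert_self _ _)

lemma le_maxStep (γ : ℕ → ℝ) {j J : ℕ} (h1 : 1 ≤ j) (h2 : j ≤ J) : γ j ≤ maxStep γ J :=
  Finset.le_sup' γ (Finset.mem_insert_of_mem (Finset.mem_Icc.2 ⟨h1, h2⟩))

lemma maxStep_mono (γ : ℕ → ℝ) : Monotone (maxStep γ) := fun _ _ h =>
  Finset.sup'_mono γ (Finset.insert_subset_insert _ (Finset.Icc_subset_Icc_right h)) _

lemma Icc_band_mono {α B M M' : ℝ} (hα0 : 0 ≤ α) (hα1 : α ≤ 1) (h : M ≤ M') :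
    Set.Icc (-α * M) (B + (1 - α) * M) ⊆ Set.Icc (-α * M') (B + (1 - α) * M') :=
  Set.Icc_subset_Icc (by nlinarith) (by nlinarith)

lemma add_mul_sub_mem_Icc_band {α B M g q r : ℝ} (hα0 : 0 ≤ α) (hα1 : α ≤ 1)
    (hg : 0 ≤ g) (hgM : g ≤ M) (hr : r ∈ Set.Icc (0 : ℝ) 1)
    (hq : q ∈ Set.Icc (-α * M) (B + (1 - α) * M))
    (hneg : q < 0 → r = 1) (hbig : B < q → r = 0) :
    q + g * (r - α) ∈ Set.Icc (-α * M) (B + (1 - α) * M) := by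
  obtain ⟨hr0, hr1⟩ := hr
  constructor
  · rcases lt_or_ge q 0 with hq0 | hq0
    · rw [hneg hq0]; nlinarith [hq.1]
    · nlinarith
  · rcases lt_or_ge B q with hqB | hqB
    · rw [hbig hqB]; nlinarith [hq.2]
    · nlinarith

theorem stmt_0_general
    (γ : ℕ → ℝ) (hγpos : ∀ j, 0 < γ j)
    (α B : ℝ) (hα : α ∈ Set.Ioo (0:ℝ) 1)
    (S : ℕ → ℕ) (hS : ∀ t, S t = 0 ∨ S t = 1)
    (r : ℕ → ℝ) (hr : ∀ t, 1 ≤ t → r t ∈ Set.Icc (0:ℝ) 1)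
    (q : ℕ → ℝ) (hq1 : q 1 ∈ Set.Icc (0:ℝ) B)
    (hrec : ∀ t, 1 ≤ t → q (t + 1) = q t + γ (Jsel S t) * (r t - α) * (S t : ℝ))
    (hrneg : ∀ t, 1 ≤ t → q t < 0 → r t = 1)
    (hrbig : ∀ t, 1 ≤ t → q t > B → (S t = 0 ∨ r t = 0)) :
    ∀ t, 1 ≤ t →
      q t ∈ Set.Icc (-α * maxStep γ (Jsel S t)) (B + (1 - α) * maxStep γ (Jsel S t)) := by
  obtain ⟨hα0, hα1⟩ := hα
  intro t ht
  induction t, ht using Nat.le_induction with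
  | base =>
    have hM : 0 ≤ maxStep γ (Jsel S 1) := (hγpos 1).le.trans (apply_one_le_maxStep γ _)
    exact Set.Icc_subset_Icc (by nlinarith) (by nlinarith) hq1
  | succ t ht ih =>
    have hJ := Jsel_succ S ht
    have hwiden := Icc_band_mono (B := B) hα0.le hα1.le
      (maxStep_mono γ (hJ ▸ Nat.le_add_right (Jsel S t) (S t)))
    rw [hrec t ht]
    rcases hS t with hS0 | hS1
    · simpa [hS0] using hwiden ih
    · rw [hS1, Nat.cast_one, mul_one]
      exact add_mul_sub_mem_Icc_band hα0.le hα1.le (hγpos _).le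
        (le_maxStep γ (one_le_Jsel S t) (by omega)) (hr t ht) (hwiden ih) (hrneg t ht)
        fun hqB => (hrbig t ht hqB).resolve_left (by omega)

/-- Lemma 1 (boundedness of the OnlineSCI threshold sequence): for any positive step
sequence `γ`, any `α ∈ (0,1)`, `B > 0`, any selection indicators `S_t ∈ {0,1}`, any
reactions `r_t ∈ [0,1]` satisfying `r_t = 1` when `q_t < 0` and (`S_t = 0` or `r_t = 0`)
when `q_t > B`, the recursion `q_{t+1} = q_t + γ_{J(t)} (r_t - α) S_t` started at
`q_1 ∈ [0,B]` stays in `[-α max_{1≤j≤J(t)} γ_j, B + (1-α) max_{1≤j≤J(t)} γ_j]`. -/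
theorem stmt_0
    (γ : ℕ → ℝ) (hγpos : ∀ j, 0 < γ j)
    (α B : ℝ) (hα : α ∈ Set.Ioo (0:ℝ) 1) (hB : 0 < B)
    (S : ℕ → ℕ) (hS : ∀ t, S t = 0 ∨ S t = 1)
    (r : ℕ → ℝ) (hr : ∀ t, 1 ≤ t → r t ∈ Set.Icc (0:ℝ) 1)
    (q : ℕ → ℝ) (hq1 : q 1 ∈ Set.Icc (0:ℝ) B)
    (hrec : ∀ t, 1 ≤ t → q (t + 1) = q t + γ (Jsel S t) * (r t - α) * (S t : ℝ))
    (hrneg : ∀ t, 1 ≤ t → q t < 0 → r t = 1)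
    (hrbig : ∀ t, 1 ≤ t → q t > B → (S t = 0 ∨ r t = 0)) :
    ∀ t, 1 ≤ t →
      q t ∈ Set.Icc (-α * maxStep γ (Jsel S t)) (B + (1 - α) * maxStep γ (Jsel S t)) :=
  stmt_0_general γ hγpos α B hα S hS r hr q hq1 hrec hrneg hrbig
end

section
/- Let f be a bounded probability density on ℝ with M := sup_x |x·f(x)| < ∞, and let F̄(x) = ∫_x^∞ f(t) dt be its upper tail. Then for all σ₁, σ₂ > 0, all x ∈ ℝ and all h ∈ ℝ: |F̄((σ₁/σ₂)·x + h/σ₂) − F̄(x)| ≤ (‖f‖_∞/σ₂)·|h| + 2·(1 ∨ M)·|σ₁/σ₂ − 1|. -/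
open MeasureTheory Set

lemma tail_diff_aux (f : ℝ → ℝ) (hfint : Integrable f) {a b : ℝ} (hab : a ≤ b) :
    (∫ t in Ioi a, f t) - ∫ t in Ioi b, f t = ∫ t in Ioc a b, f t := by
  rw [← Ioc_union_Ioi_eq_Ioi hab,
    setIntegral_union (Ioc_disjoint_Ioi le_rfl) measurableSet_Ioi
      hfint.integrableOn hfint.integrableOn]
  ring

lemma tailLip (f : ℝ → ℝ) (hfint : Integrable f) (hf0 : ∀ x, 0 ≤ f x)
    (a b K : ℝ) (hbd : ∀ t ∈ Ioc (min a b) (max a b), f t ≤ K) :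
    |(∫ t in Ioi a, f t) - ∫ t in Ioi b, f t| ≤ K * |a - b| := by
  have key : ∀ u v : ℝ, u ≤ v → (∀ t ∈ Ioc u v, f t ≤ K) →
      |(∫ t in Ioi u, f t) - ∫ t in Ioi v, f t| ≤ K * (v - u) := by
    intro u v huv hb
    rw [tail_diff_aux f hfint huv]
    have hmeas : volume (Ioc u v) < ⊤ := by
      rw [Real.volume_Ioc]; exact ENNReal.ofReal_lt_top
    have := norm_setIntegral_le_of_norm_le_const (μ := volume) hmeas
      (f := f) (C := K) (fun t ht => by
        rw [Real.norm_eq_abs, abs_of_nonneg (hf0 t)]; exact hb t ht)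
    rw [Real.norm_eq_abs] at this
    calc |∫ t in Ioc u v, f t| ≤ K * (volume (Ioc u v)).toReal := this
      _ = K * (v - u) := by rw [Real.volume_Ioc, ENNReal.toReal_ofReal (by linarith)]
  rcases le_total a b with hab | hab
  · rw [min_eq_left hab, max_eq_right hab] at hbd
    rw [show |a - b| = b - a by rw [abs_of_nonpos (by linarith), neg_sub]]
    exact key a b hab hbd
  · rw [min_eq_right hab, max_eq_left hab] at hbd
    rw [show |a - b| = a - b from abs_of_nonneg (by linarith), abs_sub_comm]
    exact key b a hab hbd

/-- Lemma 8 (tail-function stability under affine perturbation of the argument):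
if `f` is an integrable probability density bounded by `C` with `|x f(x)| ≤ M`, and
`F̄(x) = ∫_x^∞ f`, then for all `σ₁, σ₂ > 0`, `x ∈ ℝ`, `h ∈ ℝ`,
`|F̄((σ₁/σ₂) x + h/σ₂) - F̄(x)| ≤ (C/σ₂) |h| + 2 (1 ∨ M) |σ₁/σ₂ - 1|`. -/
theorem stmt_6
    (f : ℝ → ℝ) (hf0 : ∀ x, 0 ≤ f x) (hfint : Integrable f)
    (hfdens : ∫ x, f x = 1)
    (C : ℝ) (hC : ∀ x, f x ≤ C)
    (M : ℝ) (hM : ∀ x, |x * f x| ≤ M)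
    (σ₁ σ₂ : ℝ) (hσ₁ : 0 < σ₁) (hσ₂ : 0 < σ₂) (x h : ℝ) :
    |(∫ t in Ioi (σ₁ / σ₂ * x + h / σ₂), f t) - ∫ t in Ioi x, f t| ≤
      C / σ₂ * |h| + 2 * max 1 M * |σ₁ / σ₂ - 1| := by
  have hγ : 0 < σ₁ / σ₂ := div_pos hσ₁ hσ₂
  have hM0 : 0 ≤ M := le_trans (abs_nonneg _) (hM 0)
  have tri := abs_sub_le (∫ t in Ioi (σ₁ / σ₂ * x + h / σ₂), f t)
    (∫ t in Ioi (σ₁ / σ₂ * x), f t) (∫ t in Ioi x, f t)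
  have h1 : |(∫ t in Ioi (σ₁ / σ₂ * x + h / σ₂), f t) - ∫ t in Ioi (σ₁ / σ₂ * x), f t|
      ≤ C / σ₂ * |h| := by
    have := tailLip f hfint hf0 (σ₁ / σ₂ * x + h / σ₂) (σ₁ / σ₂ * x) C
      (fun t _ => hC t)
    have heq : σ₁ / σ₂ * x + h / σ₂ - σ₁ / σ₂ * x = h / σ₂ := by ring
    rw [heq, abs_div, abs_of_pos hσ₂] at this
    calc _ ≤ C * (|h| / σ₂) := this
      _ = C / σ₂ * |h| := by ring
  have h2 : |(∫ t in Ioi (σ₁ / σ₂ * x), f t) - ∫ t in Ioi x, f t|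
      ≤ 2 * max 1 M * |σ₁ / σ₂ - 1| := by
    by_cases hhalf : 1 / 2 ≤ σ₁ / σ₂
    · by_cases hx : x = 0
      · simp [hx]
      · have hbd : ∀ t ∈ Ioc (min (σ₁ / σ₂ * x) x) (max (σ₁ / σ₂ * x) x),
            f t ≤ 2 * M / |x| := by
          intro t ht
          have habs : |x| / 2 ≤ |t| := by
            rcases lt_or_gt_of_ne hx with hxneg | hxpos
            · have hb : max (σ₁ / σ₂ * x) x ≤ x / 2 := by
                apply max_le
                · nlinarith
                · linarith
              have : t ≤ x / 2 := le_trans ht.2 hb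
              rw [abs_of_neg hxneg, abs_of_neg (by linarith : t < 0)]
              linarith
            · have ha : x / 2 ≤ min (σ₁ / σ₂ * x) x := by
                apply le_min
                · nlinarith
                · linarith
              have : x / 2 < t := lt_of_le_of_lt ha ht.1
              rw [abs_of_pos hxpos, abs_of_pos (by linarith : 0 < t)]
              linarith
          have htf : |t| * f t ≤ M := by
            have := hM t
            rwa [abs_mul, abs_of_nonneg (hf0 t)] at this
          have hxpos : 0 < |x| := abs_pos.mpr hx
          rw [le_div_iff₀ hxpos]
          nlinarith [hf0 t]
        have := tailLip f hfint hf0 (σ₁ / σ₂ * x) x (2 * M / |x|) hbd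
        have heq : |σ₁ / σ₂ * x - x| = |σ₁ / σ₂ - 1| * |x| := by
          rw [← abs_mul]; ring_nf
        have hxpos : 0 < |x| := abs_pos.mpr hx
        calc _ ≤ 2 * M / |x| * |σ₁ / σ₂ * x - x| := this
          _ = 2 * M * |σ₁ / σ₂ - 1| := by rw [heq]; field_simp
          _ ≤ 2 * max 1 M * |σ₁ / σ₂ - 1| := by
              have := le_max_right (1:ℝ) M
              have := abs_nonneg (σ₁ / σ₂ - 1)
              nlinarith
    · push_neg at hhalf
      have hle : ∀ a : ℝ, (∫ t in Ioi a, f t) ≤ 1 := by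
        intro a
        rw [← hfdens]
        exact setIntegral_le_integral hfint (ae_of_all _ hf0)
      have hge : ∀ a : ℝ, 0 ≤ ∫ t in Ioi a, f t := fun a =>
        setIntegral_nonneg measurableSet_Ioi (fun t _ => hf0 t)
      have habs : |σ₁ / σ₂ - 1| = 1 - σ₁ / σ₂ := by
        rw [abs_of_neg (by linarith)]; ring
      have h1' : |(∫ t in Ioi (σ₁ / σ₂ * x), f t) - ∫ t in Ioi x, f t| ≤ 1 := by
        rw [abs_sub_le_iff]
        constructor <;> [skip; skip] <;>
          · have := hle (σ₁ / σ₂ * x); have := hge (σ₁ / σ₂ * x)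
            have := hle x; have := hge x
            linarith
      have hmax := le_max_left (1:ℝ) M
      calc _ ≤ 1 := h1'
        _ ≤ 2 * max 1 M * |σ₁ / σ₂ - 1| := by rw [habs]; nlinarith
  linarith
end

section
/- Let (X_t, Y_t)_{t≥1} be any data sequence, and let R = ((S_t), (C_t)) be any online procedure such that C_t ≠ 𝒴 whenever S_t = 1 (non-trivial prediction sets on selection), where C_t may depend on X_t and all previous pairs. Suppose that for some α ∈ (0,1), the bound FCP_t(R) ≤ α + Ψ(J(t)) holds for all t ≥ 1 and all sequences, with J(t) = 1 + Σ_{i<t} S_i and lim_{j→∞} Ψ(j) = 0, where FCP_t is computed with the coverage error err(y,C) = 1{y ∉ C}. Then there exists a sequence (X_t, Y_t)_{t≥1} for which sup_{t≥1} J(t) < ∞, i.e., the procedure makes only finitely many selections. -/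
open Finset Classical

variable {𝓧 𝓨 : Type*}

/-- Selection count `J(t) = 1 + ∑_{1 ≤ i < t} S_i` of an online procedure along a data
sequence `Z`. -/
def Jproc (Sel : ℕ → (ℕ → 𝓧 × 𝓨) → Bool) (Z : ℕ → 𝓧 × 𝓨) (t : ℕ) : ℕ :=
  1 + ∑ i ∈ Finset.Ico 1 t, (if Sel i Z then 1 else 0)

/-- False coverage proportion at time `t` along data sequence `Z`, with the coverage
error `err(y, C) = 1{y ∉ C}`. -/
noncomputable def FCPproc (Sel : ℕ → (ℕ → 𝓧 × 𝓨) → Bool)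
    (Cset : ℕ → (ℕ → 𝓧 × 𝓨) → Set 𝓨) (Z : ℕ → 𝓧 × 𝓨) (t : ℕ) : ℝ :=
  (∑ k ∈ Finset.Icc 1 t, if Sel k Z = true ∧ (Z k).2 ∉ Cset k Z then (1:ℝ) else 0) /
    max 1 (∑ k ∈ Finset.Icc 1 t, if Sel k Z = true then (1:ℝ) else 0)

set_option linter.unusedVariables false in
noncomputable def adv [Nonempty 𝓧] [Nonempty 𝓨]
    (Cset : ℕ → (ℕ → 𝓧 × 𝓨) → Set 𝓨) (t : ℕ) : 𝓧 × 𝓨 :=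
  (Classical.arbitrary 𝓧,
    if h : ((Cset t (fun s => if hs : s < t then adv Cset s
        else (Classical.arbitrary 𝓧, Classical.arbitrary 𝓨)))ᶜ).Nonempty
    then h.choose else Classical.arbitrary 𝓨)
decreasing_by all_goals exact hs

lemma adv_err [Nonempty 𝓧] [Nonempty 𝓨]
    (Sel : ℕ → (ℕ → 𝓧 × 𝓨) → Bool) (Cset : ℕ → (ℕ → 𝓧 × 𝓨) → Set 𝓨)
    (hadapted : ∀ t (Z Z' : ℕ → 𝓧 × 𝓨), (∀ s, s < t → Z s = Z' s) →
      (Z t).1 = (Z' t).1 → Sel t Z = Sel t Z' ∧ Cset t Z = Cset t Z')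
    (hnontrivial : ∀ t (Z : ℕ → 𝓧 × 𝓨), 1 ≤ t → Sel t Z = true → Cset t Z ≠ Set.univ)
    (t : ℕ) (ht : 1 ≤ t) (hsel : Sel t (adv Cset) = true) :
    (adv Cset t).2 ∉ Cset t (adv Cset) := by
  set ext : ℕ → 𝓧 × 𝓨 := fun s => if hs : s < t then adv Cset s
      else (Classical.arbitrary 𝓧, Classical.arbitrary 𝓨) with hext
  have hagree : ∀ s, s < t → adv Cset s = ext s := by
    intro s hs; simp [hext, hs]
  have hfst : (adv Cset t).1 = (ext t).1 := by
    rw [adv]; simp [hext]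
  obtain ⟨hS, hC⟩ := hadapted t (adv Cset) ext hagree hfst
  have hne : Cset t ext ≠ Set.univ := hnontrivial t ext ht (hS ▸ hsel)
  have hne' : ((Cset t ext)ᶜ).Nonempty := by
    rw [Set.nonempty_compl]; exact hne
  have : (adv Cset t).2 ∈ (Cset t ext)ᶜ := by
    rw [adv]
    simp only [hext] at hne' ⊢
    rw [dif_pos hne']
    exact hne'.choose_spec
  rw [hC]
  exact this

/-- Proposition 2(i) (incompressibility): any online procedure with non-trivial
prediction sets on the selected times which satisfies a uniform adversarial FCP bound
`FCP_t ≤ α + Ψ(J(t))` with `Ψ(j) → 0` must stop selecting after some time on at least one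
data sequence. -/
theorem stmt_8 [Nonempty 𝓧] [Nonempty 𝓨]
    (Sel : ℕ → (ℕ → 𝓧 × 𝓨) → Bool) (Cset : ℕ → (ℕ → 𝓧 × 𝓨) → Set 𝓨)
    (hadapted : ∀ t (Z Z' : ℕ → 𝓧 × 𝓨), (∀ s, s < t → Z s = Z' s) →
      (Z t).1 = (Z' t).1 → Sel t Z = Sel t Z' ∧ Cset t Z = Cset t Z')
    (hnontrivial : ∀ t (Z : ℕ → 𝓧 × 𝓨), 1 ≤ t → Sel t Z = true → Cset t Z ≠ Set.univ)
    (α : ℝ) (hα : α ∈ Set.Ioo (0:ℝ) 1)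
    (Ψ : ℕ → ℝ) (hΨ : Filter.Tendsto Ψ Filter.atTop (nhds 0))
    (hbound : ∀ (Z : ℕ → 𝓧 × 𝓨) (t : ℕ), 1 ≤ t →
      FCPproc Sel Cset Z t ≤ α + Ψ (Jproc Sel Z t)) :
    ∃ Z : ℕ → 𝓧 × 𝓨, ∃ N : ℕ, ∀ t, Jproc Sel Z t ≤ N := by
  set Z := adv Cset with hZ
  -- choose j₀ with Ψ j < 1 - α for j ≥ j₀
  have hev : ∀ᶠ j in Filter.atTop, Ψ j < 1 - α :=
    hΨ.eventually (gt_mem_nhds (by linarith [hα.2]))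
  obtain ⟨j₀, hj₀⟩ := Filter.eventually_atTop.1 hev
  refine ⟨Z, max j₀ 1, fun t => ?_⟩
  by_contra hgt
  push_neg at hgt
  have hJ1 : 1 < Jproc Sel Z t := lt_of_le_of_lt (le_max_right _ _) hgt
  -- there is a selected time in [1, t)
  have hsum : 0 < ∑ i ∈ Finset.Ico 1 t, (if Sel i Z then 1 else 0) := by
    unfold Jproc at hJ1; omega
  obtain ⟨i, hi, hSi⟩ : ∃ i ∈ Finset.Ico 1 t, Sel i Z = true := by
    by_contra h
    push_neg at h
    have : ∑ i ∈ Finset.Ico 1 t, (if Sel i Z then 1 else 0) = 0 :=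
      Finset.sum_eq_zero (fun i hi => by simp [h i hi])
    omega
  rw [Finset.mem_Ico] at hi
  have ht1 : 1 ≤ t := le_of_lt (lt_of_le_of_lt hi.1 hi.2)
  -- denominator sum
  set S : ℝ := ∑ k ∈ Finset.Icc 1 t, (if Sel k Z = true then (1:ℝ) else 0) with hS
  have hS1 : (1:ℝ) ≤ S := by
    have := Finset.single_le_sum (f := fun k => if Sel k Z = true then (1:ℝ) else 0)
      (fun k _ => by positivity) (Finset.mem_Icc.2 ⟨hi.1, le_of_lt hi.2⟩)
    rw [hS]; simpa [hSi] using this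
  -- numerator equals denominator
  have hnum : (∑ k ∈ Finset.Icc 1 t,
      if Sel k Z = true ∧ (Z k).2 ∉ Cset k Z then (1:ℝ) else 0) = S := by
    refine Finset.sum_congr rfl (fun k hk => ?_)
    rw [Finset.mem_Icc] at hk
    by_cases h : Sel k Z = true
    · have herr := adv_err Sel Cset hadapted hnontrivial k hk.1 h
      simp [h]; exact herr
    · simp [h]
  have hFCP : FCPproc Sel Cset Z t = 1 := by
    unfold FCPproc
    rw [hnum, ← hS, max_eq_right hS1, div_self (by linarith)]
  have hb := hbound Z t ht1
  rw [hFCP] at hb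
  have hjge : j₀ ≤ Jproc Sel Z t := le_of_lt (lt_of_le_of_lt (le_max_left _ _) hgt)
  have := hj₀ _ hjge
  linarith
end

section
/- In the setting of Proposition 2, no adversarially uniform vanishing FCP bound exists: if for some α ∈ (0,1) and some sequence (ε(t))_{t≥1} of reals, the bound FCP_t(R) ≤ α + ε(t) holds for all t ≥ 1 and all data sequences, then ε(t) does not converge to 0, provided the procedure selects infinitely often on at least the adversarial sequence constructed with Y_t ∉ C_t always. -/
open Finset Classical

variable {𝓧 𝓨 : Type*}

/-- Proposition 2(ii): no adversarially uniform vanishing FCP bound exists.  If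
`FCP_t(R) ≤ α + ε(t)` holds for all times and all data sequences, and the procedure
selects infinitely often on the adversarial sequence on which every outcome falls outside
the prediction set, then `ε(t)` does not converge to `0`. -/
theorem stmt_9 [Nonempty 𝓧] [Nonempty 𝓨]
    (Sel : ℕ → (ℕ → 𝓧 × 𝓨) → Bool) (Cset : ℕ → (ℕ → 𝓧 × 𝓨) → Set 𝓨)
    (hadapted : ∀ t (Z Z' : ℕ → 𝓧 × 𝓨), (∀ s, s < t → Z s = Z' s) →
      (Z t).1 = (Z' t).1 → Sel t Z = Sel t Z' ∧ Cset t Z = Cset t Z')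
    (α : ℝ) (hα : α ∈ Set.Ioo (0:ℝ) 1)
    (ε : ℕ → ℝ)
    (hbound : ∀ (Z : ℕ → 𝓧 × 𝓨) (t : ℕ), 1 ≤ t →
      FCPproc Sel Cset Z t ≤ α + ε t)
    (hadv : ∃ Z : ℕ → 𝓧 × 𝓨, (∀ t, 1 ≤ t → (Z t).2 ∉ Cset t Z) ∧
      (∀ N : ℕ, ∃ t : ℕ, N ≤ Jproc Sel Z t)) :
    ¬ Filter.Tendsto ε Filter.atTop (nhds 0) := by
  obtain ⟨Z, hmiss, hinf⟩ := hadv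
  -- find a time k ≥ 1 with Sel k Z = true
  obtain ⟨t0, ht0⟩ := hinf 2
  have hsel : ∃ k, 1 ≤ k ∧ Sel k Z = true := by
    by_contra h
    push_neg at h
    have : Jproc Sel Z t0 = 1 := by
      unfold Jproc
      have : ∀ i ∈ Finset.Ico 1 t0, (if Sel i Z then 1 else 0) = 0 := by
        intro i hi
        simp only [Finset.mem_Ico] at hi
        simp [h i hi.1]
      rw [Finset.sum_congr rfl this]
      simp
    omega
  obtain ⟨k, hk1, hkSel⟩ := hsel
  -- for all t ≥ k, FCP = 1, hence ε t ≥ 1 - α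
  have key : ∀ t, k ≤ t → 1 - α ≤ ε t := by
    intro t ht
    have ht1 : 1 ≤ t := le_trans hk1 ht
    have hFCP : FCPproc Sel Cset Z t = 1 := by
      unfold FCPproc
      have hnum : (∑ j ∈ Finset.Icc 1 t, if Sel j Z = true ∧ (Z j).2 ∉ Cset j Z then (1:ℝ) else 0)
          = ∑ j ∈ Finset.Icc 1 t, if Sel j Z = true then (1:ℝ) else 0 := by
        apply Finset.sum_congr rfl
        intro j hj
        simp only [Finset.mem_Icc] at hj
        by_cases hs : Sel j Z = true
        · simp [hs, hmiss j hj.1]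
        · simp [hs]
      rw [hnum]
      have hS : (1:ℝ) ≤ ∑ j ∈ Finset.Icc 1 t, if Sel j Z = true then (1:ℝ) else 0 := by
        have hkmem : k ∈ Finset.Icc 1 t := Finset.mem_Icc.2 ⟨hk1, ht⟩
        have h1 := Finset.single_le_sum (f := fun j => if Sel j Z = true then (1:ℝ) else 0)
          (fun j _ => by show (0:ℝ) ≤ (if Sel j Z = true then (1:ℝ) else 0); split <;> norm_num) hkmem
        simpa [hkSel] using h1
      rw [max_eq_right hS]
      exact div_self (by linarith)
    have := hbound Z t ht1
    rw [hFCP] at this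
    linarith
  intro htend
  obtain ⟨t, hlt, ht⟩ := ((htend.eventually (eventually_lt_nhds (show (0:ℝ) < 1 - α by linarith [hα.2]))).and (Filter.eventually_ge_atTop k)).exists
  exact absurd (key t ht) (not_le.2 hlt)
end

section
/- Let (M_n)_{n≥1} be a square-integrable martingale with M_0 = 0 adapted to a filtration (F_n), with predictable quadratic variation ⟨M⟩_n = Σ_{k=1}^n E[(ΔM_k)² | F_{k−1}]. Fix n ≥ 1 and suppose for each k ≤ n there exist bounded F_{k−1}-measurable random variables A_k ≤ B_k with A_k ≤ ΔM_k ≤ B_k almost surely; set D_n = Σ_{k=1}^n (B_k − A_k)². Then for all x, y > 0: P(M_n ≥ x and 2⟨M⟩_n + D_n ≤ y) ≤ exp(−3x²/y). -/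
open Real Set

namespace BDR

lemma monoOn_Icc {f f' : ℝ → ℝ} {a b : ℝ} (hf : ∀ x ∈ Icc a b, HasDerivAt f (f' x) x)
    (h' : ∀ x ∈ Icc a b, 0 ≤ f' x) : MonotoneOn f (Icc a b) := by
  refine monotoneOn_of_deriv_nonneg (convex_Icc a b) ?_ ?_ ?_
  · exact fun x hx => (hf x hx).continuousAt.continuousWithinAt
  · intro x hx
    rw [interior_Icc] at hx
    exact ((hf x ⟨hx.1.le, hx.2.le⟩).differentiableAt).differentiableWithinAt
  · intro x hx
    rw [interior_Icc] at hx
    rw [(hf x ⟨hx.1.le, hx.2.le⟩).deriv]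
    exact h' x ⟨hx.1.le, hx.2.le⟩

/-- exp x ≥ 1 + x + x²/2 for x ≥ 0, and ≤ for x ≤ 0 : sign of exp x - 1 - x - x²/2 -/
lemma exp_quad (x : ℝ) (hx : 0 ≤ x) : 1 + x + x^2/2 ≤ exp x := by
  have h := monoOn_Icc (f := fun s => exp s - 1 - s - s^2/2) (f' := fun s => exp s - 1 - s)
    (a := 0) (b := x) ?_ ?_
  · have := h (left_mem_Icc.2 hx) (right_mem_Icc.2 hx) hx
    simp only [exp_zero] at this
    nlinarith [this]
  · intro s _
    have : HasDerivAt (fun s : ℝ => exp s - 1 - s - s^2/2) (exp s - 0 - 1 - (2*s^(2-1))/2) s := by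
      exact (((Real.hasDerivAt_exp s).sub (hasDerivAt_const s 1)).sub (hasDerivAt_id s)).sub
        ((hasDerivAt_pow 2 s).div_const 2)
    convert this using 1
    norm_num
  · intro s hs
    show (0:ℝ) ≤ exp s - 1 - s
    nlinarith [add_one_le_exp s]

lemma exp_quad' (x : ℝ) (hx : x ≤ 0) : exp x ≤ 1 + x + x^2/2 := by
  have h := monoOn_Icc (f := fun s => exp s - 1 - s - s^2/2) (f' := fun s => exp s - 1 - s)
    (a := x) (b := 0) ?_ ?_
  · have := h (left_mem_Icc.2 hx) (right_mem_Icc.2 hx) hx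
    simp only [exp_zero] at this
    nlinarith [this]
  · intro s _
    have : HasDerivAt (fun s : ℝ => exp s - 1 - s - s^2/2) (exp s - 0 - 1 - (2*s^(2-1))/2) s := by
      exact (((Real.hasDerivAt_exp s).sub (hasDerivAt_const s 1)).sub (hasDerivAt_id s)).sub
        ((hasDerivAt_pow 2 s).div_const 2)
    convert this using 1
    norm_num
  · intro s _
    show (0:ℝ) ≤ exp s - 1 - s
    nlinarith [add_one_le_exp s]

/-- Nm x = (x-2)eˣ + x + 2; Nm ≥ 0 on x ≥ 0, ≤ 0 on x ≤ 0 -/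
lemma Nm_deriv (x : ℝ) : HasDerivAt (fun s => (s-2)*exp s + s + 2) ((x-1)*exp x + 1) x := by
  have h : HasDerivAt (fun s : ℝ => (s-2)*exp s + s + 2)
      ((1-0)*exp x + (x-2)*exp x + 1 + 0) x := by
    exact ((((hasDerivAt_id x).sub (hasDerivAt_const x (2:ℝ))).mul (Real.hasDerivAt_exp x)).add
      (hasDerivAt_id x)).add (hasDerivAt_const x (2:ℝ))
  convert h using 1
  ring

lemma Nm'_deriv (x : ℝ) : HasDerivAt (fun s => (s-1)*exp s + 1) (x*exp x) x := by
  have h : HasDerivAt (fun s : ℝ => (s-1)*exp s + 1)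
      ((1-0)*exp x + (x-1)*exp x + 0) x := by
    exact (((hasDerivAt_id x).sub (hasDerivAt_const x (1:ℝ))).mul (Real.hasDerivAt_exp x)).add
      (hasDerivAt_const x (1:ℝ))
  convert h using 1
  ring

lemma Nm'_nonneg (x : ℝ) : 0 ≤ (x-1)*exp x + 1 := by
  rcases le_or_gt 0 x with hx | hx
  · have h := monoOn_Icc (f := fun s => (s-1)*exp s + 1) (f' := fun s => s*exp s)
      (a := 0) (b := x) (fun s _ => Nm'_deriv s)
      (fun s hs => mul_nonneg hs.1 (exp_pos s).le)
    have := h (left_mem_Icc.2 hx) (right_mem_Icc.2 hx) hx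
    simp only [exp_zero] at this
    nlinarith [this]
  · have h := monoOn_Icc (f := fun s => -((s-1)*exp s + 1)) (f' := fun s => -(s*exp s))
      (a := x) (b := 0) (fun s _ => (Nm'_deriv s).neg)
      (fun s hs => by
        show (0:ℝ) ≤ -(s*exp s)
        nlinarith [mul_nonpos_of_nonpos_of_nonneg hs.2 (exp_pos s).le])
    have := h (left_mem_Icc.2 hx.le) (right_mem_Icc.2 hx.le) hx.le
    simp only [exp_zero] at this
    nlinarith [this]

lemma Nm_nonneg {x : ℝ} (hx : 0 ≤ x) : 0 ≤ (x-2)*exp x + x + 2 := by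
  have h := monoOn_Icc (f := fun s => (s-2)*exp s + s + 2) (f' := fun s => (s-1)*exp s + 1)
    (a := 0) (b := x) (fun s _ => Nm_deriv s) (fun s _ => Nm'_nonneg s)
  have := h (left_mem_Icc.2 hx) (right_mem_Icc.2 hx) hx
  simp only [exp_zero] at this
  nlinarith [this]

lemma Nm_nonpos {x : ℝ} (hx : x ≤ 0) : (x-2)*exp x + x + 2 ≤ 0 := by
  have h := monoOn_Icc (f := fun s => (s-2)*exp s + s + 2) (f' := fun s => (s-1)*exp s + 1)
    (a := x) (b := 0) (fun s _ => Nm_deriv s) (fun s _ => Nm'_nonneg s)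
  have := h (left_mem_Icc.2 hx) (right_mem_Icc.2 hx) hx
  simp only [exp_zero] at this
  nlinarith [this]

end BDR

namespace BDR
open Real Set

lemma phi_deriv {s : ℝ} (hs : s ≠ 0) : HasDerivAt (fun u => (exp u - 1 - u)/u^2)
    ((s*((s-2)*exp s + s + 2))/(s^2)^2) s := by
  have h : HasDerivAt (fun u : ℝ => (exp u - 1 - u)/u^2)
      (((exp s - 0 - 1)*s^2 - (exp s - 1 - s)*(2*s^(2-1)))/(s^2)^2) s := by
    exact HasDerivAt.div (((Real.hasDerivAt_exp s).sub (hasDerivAt_const s (1:ℝ))).sub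
      (hasDerivAt_id s)) (hasDerivAt_pow 2 s) (pow_ne_zero 2 hs)
  convert h using 1
  push_cast
  ring

lemma gmono {w W : ℝ} (h : w ≤ W) : (exp w - 1 - w)*W^2 ≤ (exp W - 1 - W)*w^2 := by
  have qw : 0 ≤ exp w - 1 - w := by nlinarith [add_one_le_exp w]
  have qW : 0 ≤ exp W - 1 - W := by nlinarith [add_one_le_exp W]
  rcases le_or_gt w 0 with hw | hw
  · rcases le_or_gt 0 W with hW | hW
    · -- w ≤ 0 ≤ W
      have h1 := exp_quad' w hw
      have h2 := exp_quad W hW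
      nlinarith [sq_nonneg w, sq_nonneg W, mul_nonneg qw (sq_nonneg W)]
    · -- w ≤ W < 0
      have hmono := monoOn_Icc (f := fun u => (exp u - 1 - u)/u^2)
        (f' := fun s => (s*((s-2)*exp s + s + 2))/(s^2)^2) (a := w) (b := W)
        (fun s hs => phi_deriv (by rcases hs with ⟨_, h2⟩; exact (lt_of_le_of_lt h2 hW).ne))
        (fun s hs => by
          have hs0 : s < 0 := lt_of_le_of_lt hs.2 hW
          have := Nm_nonpos hs0.le
          have hnum : 0 ≤ s*((s-2)*exp s + s + 2) := by nlinarith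
          positivity)
      have := hmono (left_mem_Icc.2 h) (right_mem_Icc.2 h) h
      simp only [] at this
      have hw2 : (0:ℝ) < w^2 := lt_of_le_of_ne (sq_nonneg w) (Ne.symm (pow_ne_zero 2 (lt_of_le_of_lt h hW).ne))
      have hW2 : (0:ℝ) < W^2 := lt_of_le_of_ne (sq_nonneg W) (Ne.symm (pow_ne_zero 2 hW.ne))
      rw [div_le_div_iff₀ hw2 hW2] at this
      linarith [this]
  · -- 0 < w ≤ W
    have hmono := monoOn_Icc (f := fun u => (exp u - 1 - u)/u^2)
      (f' := fun s => (s*((s-2)*exp s + s + 2))/(s^2)^2) (a := w) (b := W)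
      (fun s hs => phi_deriv (by rcases hs with ⟨h1, _⟩; exact (lt_of_lt_of_le hw h1).ne'))
      (fun s hs => by
        have hs0 : 0 < s := lt_of_lt_of_le hw hs.1
        have := Nm_nonneg hs0.le
        positivity)
    have := hmono (left_mem_Icc.2 h) (right_mem_Icc.2 h) h
    simp only [] at this
    have hw2 : (0:ℝ) < w^2 := lt_of_le_of_ne (sq_nonneg w) (Ne.symm (pow_ne_zero 2 hw.ne'))
    have hW2 : (0:ℝ) < W^2 := lt_of_le_of_ne (sq_nonneg W) (Ne.symm (pow_ne_zero 2 (lt_of_lt_of_le hw h).ne'))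
    rw [div_le_div_iff₀ hw2 hW2] at this
    linarith [this]

/-- The tangent-line-plus-quadratic majorant of `exp` on `(-∞, b]`. -/
lemma maj {u1 b u : ℝ} (hub : u ≤ b) (h1b : u1 < b) :
    exp u ≤ exp u1 * (1 + (u - u1)) + (exp u1 * ((exp (b-u1) - 1 - (b-u1))/(b-u1)^2)) * (u - u1)^2 := by
  have hWpos : (0:ℝ) < b - u1 := by linarith
  have hW2 : (0:ℝ) < (b-u1)^2 := by positivity
  have key : (exp (u-u1) - 1 - (u-u1)) ≤ ((exp (b-u1) - 1 - (b-u1))/(b-u1)^2) * (u-u1)^2 := by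
    rw [div_mul_eq_mul_div, le_div_iff₀ hW2]
    exact gmono (by linarith : u - u1 ≤ b - u1)
  have hexpu : exp u = exp u1 * exp (u-u1) := by
    rw [← exp_add]
    congr 1
    ring
  have hmul := mul_le_mul_of_nonneg_left
    (by linarith [key] : exp (u-u1) ≤ (1 + (u - u1)) + ((exp (b-u1) - 1 - (b-u1))/(b-u1)^2) * (u-u1)^2)
    (exp_pos u1).le
  rw [hexpu]
  nlinarith [hmul]

end BDR

namespace BDR

lemma monoOn_Icc' {f f' : ℝ → ℝ} {a b : ℝ} (hf : ∀ x ∈ Icc a b, HasDerivAt f (f' x) x)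
    (h' : ∀ x ∈ Icc a b, 0 ≤ f' x) : MonotoneOn f (Icc a b) := by
  refine monotoneOn_of_deriv_nonneg (convex_Icc a b) ?_ ?_ ?_
  · exact fun x hx => (hf x hx).continuousAt.continuousWithinAt
  · intro x hx
    rw [interior_Icc] at hx
    exact ((hf x ⟨hx.1.le, hx.2.le⟩).differentiableAt).differentiableWithinAt
  · intro x hx
    rw [interior_Icc] at hx
    rw [(hf x ⟨hx.1.le, hx.2.le⟩).deriv]
    exact h' x ⟨hx.1.le, hx.2.le⟩

lemma monoOn_Ici' {f f' : ℝ → ℝ} {a : ℝ} (hf : ∀ x ∈ Ici a, HasDerivAt f (f' x) x)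
    (h' : ∀ x ∈ Ici a, 0 ≤ f' x) : MonotoneOn f (Ici a) := by
  refine monotoneOn_of_deriv_nonneg (convex_Ici a) ?_ ?_ ?_
  · exact fun x hx => (hf x hx).continuousAt.continuousWithinAt
  · intro x hx
    rw [interior_Ici] at hx
    exact ((hf x (mem_Ici.2 (le_of_lt (mem_Ioi.1 hx)))).differentiableAt).differentiableWithinAt
  · intro x hx
    rw [interior_Ici] at hx
    rw [(hf x (mem_Ici.2 (le_of_lt (mem_Ioi.1 hx)))).deriv]
    exact h' x (mem_Ici.2 (le_of_lt (mem_Ioi.1 hx)))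

lemma hasDerivAt_tanh (x : ℝ) : HasDerivAt Real.tanh (1 - Real.tanh x ^ 2) x := by
  have h : HasDerivAt (fun y => Real.sinh y / Real.cosh y)
      ((Real.cosh x * Real.cosh x - Real.sinh x * Real.sinh x)/(Real.cosh x)^2) x :=
    (Real.hasDerivAt_sinh x).div (Real.hasDerivAt_cosh x) (Real.cosh_pos x).ne'
  have heq : (fun y => Real.sinh y / Real.cosh y) = Real.tanh := by
    funext y
    rw [Real.tanh_eq_sinh_div_cosh]
  rw [heq] at h
  convert h using 1
  have hc := Real.cosh_pos x
  have hsq := Real.cosh_sq_sub_sinh_sq x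
  rw [Real.tanh_eq_sinh_div_cosh]
  field_simp

lemma tanh_sq_le_one (x : ℝ) : Real.tanh x ^ 2 ≤ 1 := by
  rw [Real.tanh_eq_sinh_div_cosh, div_pow]
  rw [div_le_one (by positivity)]
  nlinarith [Real.cosh_sq_sub_sinh_sq x, Real.cosh_pos x]

lemma tanh_nonneg {x : ℝ} (hx : 0 ≤ x) : 0 ≤ Real.tanh x := by
  rw [Real.tanh_eq_sinh_div_cosh]
  exact div_nonneg (by rwa [Real.sinh_nonneg_iff]) (Real.cosh_pos x).le

lemma tanh_mono : Monotone Real.tanh := by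
  have := monotone_of_deriv_nonneg (f := Real.tanh) ?_ ?_
  · exact this
  · exact fun x => (hasDerivAt_tanh x).differentiableAt
  · intro x
    rw [(hasDerivAt_tanh x).deriv]
    nlinarith [tanh_sq_le_one x]

lemma tanh_sq_mono {x y : ℝ} (h : |y| ≤ |x|) : Real.tanh y ^ 2 ≤ Real.tanh x ^ 2 := by
  have h1 : ∀ z : ℝ, Real.tanh z ^ 2 = Real.tanh |z| ^ 2 := by
    intro z
    rcases abs_cases z with ⟨h1, _⟩ | ⟨h1, _⟩
    · rw [h1]
    · rw [h1, Real.tanh_neg]; ring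
  rw [h1 x, h1 y]
  have h2 : Real.tanh |y| ≤ Real.tanh |x| := tanh_mono h
  have h3 : 0 ≤ Real.tanh |y| := tanh_nonneg (abs_nonneg y)
  nlinarith

/-- k(τ) = tanh τ - τ(1 - tanh²τ) ≥ 0 for τ ≥ 0 -/
lemma tanh_sub_linear {τ : ℝ} (hτ : 0 ≤ τ) : τ * (1 - Real.tanh τ ^ 2) ≤ Real.tanh τ := by
  have hmono := monoOn_Icc' (f := fun s => Real.tanh s - s * (1 - Real.tanh s ^ 2))
    (f' := fun s => 2 * s * Real.tanh s * (1 - Real.tanh s ^ 2)) (a := 0) (b := τ) ?_ ?_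
  · have := hmono (left_mem_Icc.2 hτ) (right_mem_Icc.2 hτ) hτ
    simp only [Real.tanh_zero] at this
    nlinarith [this]
  · intro s _
    have h1 : HasDerivAt (fun s => Real.tanh s - s * (1 - Real.tanh s ^ 2))
        ((1 - Real.tanh s ^ 2) - (1 * (1 - Real.tanh s ^ 2) +
          s * (0 - 2 * Real.tanh s ^ (2-1) * (1 - Real.tanh s ^ 2)))) s := by
      refine (hasDerivAt_tanh s).sub ((hasDerivAt_id s).mul (HasDerivAt.sub ?_ ?_))
      · exact hasDerivAt_const s (1:ℝ)
      · exact (hasDerivAt_tanh s).pow 2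
    convert h1 using 1
    push_cast
    ring
  · intro s hs
    have h1 := tanh_sq_le_one s
    have h2 := tanh_nonneg hs.1
    show (0:ℝ) ≤ 2 * s * Real.tanh s * (1 - Real.tanh s ^ 2)
    have := mul_nonneg (mul_nonneg (by linarith [hs.1] : (0:ℝ) ≤ 2*s) h2)
      (by linarith : (0:ℝ) ≤ 1 - Real.tanh s ^ 2)
    nlinarith [this]

/-- concavity bound: for 0 ≤ τ ≤ w, τ tanh w ≤ w tanh τ -/
lemma tanh_concave {τ w : ℝ} (h0 : 0 ≤ τ) (hw : τ ≤ w) : τ * Real.tanh w ≤ w * Real.tanh τ := by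
  have hmono := monoOn_Icc' (f := fun y => y * Real.tanh τ - τ * Real.tanh y)
    (f' := fun y => Real.tanh τ - τ * (1 - Real.tanh y ^ 2)) (a := τ) (b := w) ?_ ?_
  · have := hmono (left_mem_Icc.2 hw) (right_mem_Icc.2 hw) hw
    simp only [] at this
    nlinarith [this]
  · intro y _
    have h1 : HasDerivAt (fun y => y * Real.tanh τ - τ * Real.tanh y)
        (1 * Real.tanh τ - τ * (1 - Real.tanh y ^ 2)) y := by
      exact ((hasDerivAt_id y).mul_const (Real.tanh τ)).sub
        ((hasDerivAt_tanh y).const_mul τ)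
    convert h1 using 1
    ring
  · intro y hy
    have h2 : Real.tanh τ ^ 2 ≤ Real.tanh y ^ 2 := by
      apply tanh_sq_mono
      rw [abs_of_nonneg h0, abs_of_nonneg (le_trans h0 hy.1)]
      exact hy.1
    have h3 := tanh_sub_linear h0
    show (0:ℝ) ≤ Real.tanh τ - τ * (1 - Real.tanh y ^ 2)
    nlinarith

/-- squared concavity bound: |τ| ≤ w ⇒ tanh(w)² τ² ≤ w² tanh(τ)² -/
lemma tanh_sq_concave {τ w : ℝ} (h1 : -w ≤ τ) (h2 : τ ≤ w) :
    Real.tanh w ^ 2 * τ ^ 2 ≤ w ^ 2 * Real.tanh τ ^ 2 := by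
  have hw0 : 0 ≤ w := by linarith
  have habs : |τ| ≤ w := abs_le.2 ⟨h1, h2⟩
  have key : |τ| * Real.tanh w ≤ w * Real.tanh |τ| := tanh_concave (abs_nonneg τ) habs
  have h3 : 0 ≤ |τ| * Real.tanh w := mul_nonneg (abs_nonneg τ) (tanh_nonneg hw0)
  have h4 : (|τ| * Real.tanh w)^2 ≤ (w * Real.tanh |τ|)^2 := by
    apply sq_le_sq' _ key
    nlinarith [key]
  have h5 : ∀ z : ℝ, Real.tanh z ^ 2 = Real.tanh |z| ^ 2 := by
    intro z
    rcases abs_cases z with ⟨e, _⟩ | ⟨e, _⟩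
    · rw [e]
    · rw [e, Real.tanh_neg]; ring
  calc Real.tanh w ^ 2 * τ ^ 2 = (|τ| * Real.tanh w)^2 := by rw [← sq_abs τ]; ring
    _ ≤ (w * Real.tanh |τ|)^2 := h4
    _ = w ^ 2 * Real.tanh τ ^ 2 := by rw [h5 τ]; ring

end BDR

namespace BDR
open Real Set

lemma log_cosh_hasDerivAt (y : ℝ) : HasDerivAt (fun x => log (cosh x)) (tanh y) y := by
  have h := (Real.hasDerivAt_cosh y).log (Real.cosh_pos y).ne'
  convert h using 1
  rw [Real.tanh_eq_sinh_div_cosh]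

lemma psi_hasDerivAt (w v : ℝ) :
    HasDerivAt (fun u => u^2/2 - u^2*(tanh w)^2/6 - u*tanh w + log (cosh w) - log (cosh (w - u)))
      (v - v*(tanh w)^2/3 - tanh w + tanh (w - v)) v := by
  have hinner : HasDerivAt (fun u : ℝ => w - u) (0 - 1) v :=
    (hasDerivAt_const v w).sub (hasDerivAt_id v)
  have h5 : HasDerivAt (fun u : ℝ => log (cosh (w - u))) (tanh (w - v) * (0 - 1)) v :=
    (log_cosh_hasDerivAt (w - v)).comp v hinner
  have h : HasDerivAt
      (fun u => u^2/2 - u^2*(tanh w)^2/6 - u*tanh w + log (cosh w) - log (cosh (w - u)))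
      (((2*v^(2-1))/2 - (2*v^(2-1)*(tanh w)^2)/6 - 1*tanh w + 0) - tanh (w - v) * (0 - 1)) v := by
    exact (((((hasDerivAt_pow 2 v).div_const 2).sub
      (((hasDerivAt_pow 2 v).mul_const ((tanh w)^2)).div_const 6)).sub
      ((hasDerivAt_id v).mul_const (tanh w))).add
      (hasDerivAt_const v (log (cosh w)))).sub h5
  convert h using 1
  push_cast
  ring

lemma psi'_hasDerivAt (w v : ℝ) :
    HasDerivAt (fun u => u - u*(tanh w)^2/3 - tanh w + tanh (w - u))
      (tanh (w - v)^2 - (tanh w)^2/3) v := by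
  have hinner : HasDerivAt (fun u : ℝ => w - u) (0 - 1) v :=
    (hasDerivAt_const v w).sub (hasDerivAt_id v)
  have h4 : HasDerivAt (fun u : ℝ => tanh (w - u)) ((1 - tanh (w - v)^2) * (0 - 1)) v :=
    (hasDerivAt_tanh (w - v)).comp v hinner
  have h : HasDerivAt (fun u => u - u*(tanh w)^2/3 - tanh w + tanh (w - u))
      ((1 - (1*(tanh w)^2)/3 - 0) + (1 - tanh (w - v)^2) * (0 - 1)) v := by
    exact (((hasDerivAt_id v).sub (((hasDerivAt_id v).mul_const ((tanh w)^2)).div_const 3)).sub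
      (hasDerivAt_const v (tanh w))).add h4
  convert h using 1
  ring

/-- The key inequality (♦). -/
lemma diamond (w : ℝ) {v : ℝ} (hv : 0 ≤ v) :
    log (cosh (w - v)) - log (cosh w) + v * tanh w ≤ v^2/2 - v^2 * tanh w ^ 2 / 6 := by
  set ψ : ℝ → ℝ := fun u => u^2/2 - u^2*(tanh w)^2/6 - u*tanh w + log (cosh w) - log (cosh (w - u)) with hψdef
  set ψ' : ℝ → ℝ := fun u => u - u*(tanh w)^2/3 - tanh w + tanh (w - u) with hψ'def
  have hψd : ∀ u, HasDerivAt ψ (ψ' u) u := fun u => psi_hasDerivAt w u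
  have hψ'd : ∀ u, HasDerivAt ψ' (tanh (w - u)^2 - (tanh w)^2/3) u := fun u => psi'_hasDerivAt w u
  have hψ0 : ψ 0 = 0 := by simp [hψdef]
  have hψ'0 : ψ' 0 = 0 := by simp [hψ'def]
  suffices h : 0 ≤ ψ v by
    simp only [hψdef] at h
    nlinarith [h]
  rcases le_or_gt w 0 with hw | hw
  · -- easy case w ≤ 0 : ψ is convex on [0,∞)
    have hψ'' : ∀ u ∈ Ici (0:ℝ), 0 ≤ tanh (w - u)^2 - (tanh w)^2/3 := by
      intro u hu
      have habs : |w| ≤ |w - u| := by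
        rw [abs_of_nonpos hw, abs_of_nonpos (by linarith [mem_Ici.1 hu] : w - u ≤ 0)]
        linarith [mem_Ici.1 hu]
      have := tanh_sq_mono habs
      nlinarith [sq_nonneg (tanh w)]
    have hm' := monoOn_Ici' (fun u _ => hψ'd u) hψ''
    have hψ'nn : ∀ u ∈ Ici (0:ℝ), 0 ≤ ψ' u := by
      intro u hu
      have := hm' (self_mem_Ici) hu (mem_Ici.1 hu)
      rw [hψ'0] at this
      exact this
    have hm := monoOn_Ici' (fun u _ => hψd u) hψ'nn
    have := hm (self_mem_Ici) (mem_Ici.2 hv) hv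
    rw [hψ0] at this
    exact this
  · -- hard case w > 0
    have hw2 : (0:ℝ) < w^2 := by positivity
    -- Θ₁ on [0, 2w]
    set P : ℝ → ℝ := fun u => (u^4 - 4*w*u^3 + 4*w^2*u^2)/(12*w^2) with hPdef
    set P' : ℝ → ℝ := fun u => (4*u^3 - 12*w*u^2 + 8*w^2*u)/(12*w^2) with hP'def
    have hPd : ∀ u, HasDerivAt P (P' u) u := by
      intro u
      have h : HasDerivAt (fun s : ℝ => s^4 - 4*w*s^3 + 4*w^2*s^2)
          ((4*u^(4-1)) - 4*w*(3*u^(3-1)) + 4*w^2*(2*u^(2-1))) u := by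
        exact ((hasDerivAt_pow 4 u).sub ((hasDerivAt_pow 3 u).const_mul (4*w))).add
          ((hasDerivAt_pow 2 u).const_mul (4*w^2))
      have h2 := h.div_const (12*w^2)
      refine h2.congr_deriv ?_
      simp [hP'def]
      push_cast
      ring
    have hP'd : ∀ u, HasDerivAt P' ((12*u^2 - 24*w*u + 8*w^2)/(12*w^2)) u := by
      intro u
      have h : HasDerivAt (fun s : ℝ => 4*s^3 - 12*w*s^2 + 8*w^2*s)
          ((4*(3*u^(3-1))) - 12*w*(2*u^(2-1)) + 8*w^2*1) u := by
        exact (((hasDerivAt_pow 3 u).const_mul 4).sub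
          ((hasDerivAt_pow 2 u).const_mul (12*w))).add ((hasDerivAt_id u).const_mul (8*w^2))
      have h2 := h.div_const (12*w^2)
      refine h2.congr_deriv ?_
      push_cast
      ring
    have hT2 : (0:ℝ) ≤ (tanh w)^2 := sq_nonneg _
    -- Θ₁' is monotone on [0, 2w]
    have hΘ₁''nn : ∀ u ∈ Icc (0:ℝ) (2*w), 0 ≤ (tanh (w - u)^2 - (tanh w)^2/3)
        - (tanh w)^2 * ((12*u^2 - 24*w*u + 8*w^2)/(12*w^2)) := by
      intro u hu
      have hkey := tanh_sq_concave (τ := w - u) (w := w) (by linarith [hu.2]) (by linarith [hu.1])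
      have heq : (tanh w)^2/3 + (tanh w)^2 * ((12*u^2 - 24*w*u + 8*w^2)/(12*w^2))
          = ((tanh w)^2 * (w-u)^2)/w^2 := by
        field_simp
        ring
      have h2 : ((tanh w)^2 * (w-u)^2)/w^2 ≤ tanh (w - u)^2 := by
        rw [div_le_iff₀ hw2]
        nlinarith [hkey]
      linarith [heq ▸ h2]
    have hmΘ₁' := monoOn_Icc' (f := fun u => ψ' u - (tanh w)^2 * P' u)
      (f' := fun u => (tanh (w - u)^2 - (tanh w)^2/3)
        - (tanh w)^2 * ((12*u^2 - 24*w*u + 8*w^2)/(12*w^2)))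
      (a := 0) (b := 2*w)
      (fun u _ => (hψ'd u).sub ((hP'd u).const_mul ((tanh w)^2))) hΘ₁''nn
    have hΘ₁'0 : ψ' 0 - (tanh w)^2 * P' 0 = 0 := by
      rw [hψ'0]
      simp [hP'def]
    have hΘ₁'nn : ∀ u ∈ Icc (0:ℝ) (2*w), 0 ≤ ψ' u - (tanh w)^2 * P' u := by
      intro u hu
      have := hmΘ₁' (left_mem_Icc.2 (by linarith)) hu hu.1
      simp only [] at this
      rw [hΘ₁'0] at this
      exact this
    have hmΘ₁ := monoOn_Icc' (f := fun u => ψ u - (tanh w)^2 * P u)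
      (f' := fun u => ψ' u - (tanh w)^2 * P' u) (a := 0) (b := 2*w)
      (fun u _ => (hψd u).sub ((hPd u).const_mul ((tanh w)^2))) hΘ₁'nn
    have hΘ₁0 : ψ 0 - (tanh w)^2 * P 0 = 0 := by
      rw [hψ0]
      simp [hPdef]
    have hΘ₁nn : ∀ u ∈ Icc (0:ℝ) (2*w), 0 ≤ ψ u - (tanh w)^2 * P u := by
      intro u hu
      have := hmΘ₁ (left_mem_Icc.2 (by linarith)) hu hu.1
      simp only [] at this
      rw [hΘ₁0] at this
      exact this
    have hPnn : ∀ u : ℝ, 0 ≤ P u := by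
      intro u
      rw [hPdef]
      have : u^4 - 4*w*u^3 + 4*w^2*u^2 = (u*(u - 2*w))^2 := by ring
      simp only []
      rw [this]
      positivity
    rcases le_or_gt v (2*w) with hv2 | hv2
    · have h1 := hΘ₁nn v ⟨hv, hv2⟩
      have h2 := hPnn v
      nlinarith [h1, h2, hT2]
    · -- v > 2w : second piece
      have hψ2w : 0 ≤ ψ (2*w) := by
        have h1 := hΘ₁nn (2*w) ⟨by linarith, le_refl _⟩
        have hP2w : P (2*w) = 0 := by
          simp only [hPdef]
          field_simp
          ring
        rw [hP2w] at h1
        simpa using h1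
      have hψ'2w : 0 ≤ ψ' (2*w) := by
        have h1 := hΘ₁'nn (2*w) ⟨by linarith, le_refl _⟩
        have hP'2w : P' (2*w) = 0 := by
          simp only [hP'def]
          field_simp
          ring
        rw [hP'2w] at h1
        simpa using h1
      -- Θ₂ = ψ - T² (u-2w)²/3 on [2w, ∞)
      have hQd : ∀ u : ℝ, HasDerivAt (fun s : ℝ => (s - 2*w)^2/3) (2*(u - 2*w)/3) u := by
        intro u
        have hin : HasDerivAt (fun s : ℝ => s - 2*w) (1 - 0) u :=
          (hasDerivAt_id u).sub (hasDerivAt_const u (2*w))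
        have h := (hin.pow 2).div_const 3
        refine h.congr_deriv ?_
        push_cast
        ring
      have hΘ₂''nn : ∀ u ∈ Ici (2*w), 0 ≤ (tanh (w - u)^2 - (tanh w)^2/3)
          - (tanh w)^2 * (2/3) := by
        intro u hu
        have habs : |w| ≤ |w - u| := by
          rw [abs_of_pos hw, abs_of_nonpos (by linarith [mem_Ici.1 hu] : w - u ≤ 0)]
          linarith [mem_Ici.1 hu]
        have := tanh_sq_mono habs
        nlinarith
      have hmΘ₂' := monoOn_Ici' (f := fun u => ψ' u - (tanh w)^2 * (2*(u - 2*w)/3))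
        (f' := fun u => (tanh (w - u)^2 - (tanh w)^2/3) - (tanh w)^2 * (2/3))
        (a := 2*w)
        (fun u _ => by
          have hlin : HasDerivAt (fun s : ℝ => 2*(s - 2*w)/3) (2*(1-0)/3) u := by
            exact (((hasDerivAt_id u).sub (hasDerivAt_const u (2*w))).const_mul 2).div_const 3
          have := (hψ'd u).sub ((hlin.const_mul ((tanh w)^2)))
          refine this.congr_deriv ?_
          ring) hΘ₂''nn
      have hΘ₂'nn : ∀ u ∈ Ici (2*w), 0 ≤ ψ' u - (tanh w)^2 * (2*(u - 2*w)/3) := by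
        intro u hu
        have := hmΘ₂' self_mem_Ici hu (mem_Ici.1 hu)
        simp only [] at this
        have h0 : (2:ℝ)*(2*w - 2*w)/3 = 0 := by ring
        rw [h0, mul_zero, sub_zero] at this
        exact le_trans hψ'2w this
      have hmΘ₂ := monoOn_Ici' (f := fun u => ψ u - (tanh w)^2 * ((u - 2*w)^2/3))
        (f' := fun u => ψ' u - (tanh w)^2 * (2*(u - 2*w)/3)) (a := 2*w)
        (fun u _ => (hψd u).sub ((hQd u).const_mul ((tanh w)^2))) hΘ₂'nn
      have h1 := hmΘ₂ self_mem_Ici (mem_Ici.2 hv2.le) hv2.le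
      simp only [] at h1
      have h2 : ψ (2*w) - (tanh w)^2 * ((2*w - 2*w)^2/3) = ψ (2*w) := by
        simp
      rw [h2] at h1
      have h3 : 0 ≤ (tanh w)^2 * ((v - 2*w)^2/3) := by positivity
      have h4 := le_trans hψ2w h1
      exact le_trans h3 (sub_nonneg.mp h4)

/-- CORE two-point inequality: for a ≤ 0 ≤ b,
    b e^a - a e^b ≤ (b-a) exp(-ab/6 + (b-a)²/12). -/
lemma core {a b : ℝ} (ha : a ≤ 0) (hb : 0 ≤ b) :
    b * exp a - a * exp b ≤ (b - a) * exp (-(a*b)/6 + (b-a)^2/12) := by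
  rcases eq_or_lt_of_le ha with ha0 | ha0
  · -- a = 0
    subst ha0
    simp only [exp_zero, mul_one, neg_zero, zero_mul, mul_zero, zero_div, zero_add, sub_zero]
    nlinarith [one_le_exp (by positivity : (0:ℝ) ≤ b^2/12), hb]
  rcases eq_or_lt_of_le hb with hb0 | hb0
  · -- b = 0
    rw [← hb0]
    simp only [exp_zero, mul_one, zero_mul, mul_zero, zero_sub, zero_div, neg_zero, zero_add]
    have h1 : (0:ℝ) ≤ -a := by linarith
    have h2 := mul_le_mul_of_nonneg_left (one_le_exp (show (0:ℝ) ≤ (-a)^2/12 by positivity)) h1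
    simp only [mul_one] at h2
    linarith [h2]
  -- a < 0 < b
  have hba : (0:ℝ) < b - a := by linarith
  set v : ℝ := (b - a)/2 with hvdef
  set r : ℝ := (a + b)/(b - a) with hrdef
  have hv : 0 < v := by simp only [hvdef]; linarith
  have h1r : 0 < 1 - r := by
    simp only [hrdef]
    rw [sub_pos, div_lt_one hba]
    linarith
  have h1r' : 0 < 1 + r := by
    simp only [hrdef]
    have : -1 < (a+b)/(b-a) := by
      rw [lt_div_iff₀ hba]
      linarith
    linarith
  set w : ℝ := log ((1+r)/(1-r)) / 2 with hwdef
  have hE2 : exp w * exp w = (1+r)/(1-r) := by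
    rw [← exp_add, show w + w = log ((1+r)/(1-r)) by simp only [hwdef]; ring]
    exact exp_log (by positivity)
  have htanh : tanh w = r := by
    rw [Real.tanh_eq_sinh_div_cosh, Real.sinh_eq, Real.cosh_eq, Real.exp_neg]
    have hEpos := exp_pos w
    rw [div_eq_iff (by positivity : ((exp w + (exp w)⁻¹)/2 : ℝ) ≠ 0)]
    field_simp at hE2 ⊢
    nlinarith [hE2]
  have hab : a = r*v - v := by
    simp only [hrdef, hvdef]
    field_simp
    ring
  have hbb : b = r*v + v := by
    simp only [hrdef, hvdef]
    field_simp
    ring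
  -- rewrite LHS
  have hLHS : b * exp a - a * exp b = (b - a) * (exp (r*v) * (cosh v - r * sinh v)) := by
    rw [Real.cosh_eq, Real.sinh_eq]
    have hea : exp a = exp (r*v) * exp (-v) := by rw [← exp_add, hab]; ring_nf
    have heb : exp b = exp (r*v) * exp v := by rw [← exp_add, hbb]
    rw [hea, heb]
    have h2v : b - a = 2*v := by simp only [hvdef]; ring
    rw [h2v, hab, hbb]
    ring
  -- cosh v - r sinh v = cosh (w - v) / cosh w
  have hfrac : cosh v - r * sinh v = cosh (w - v) / cosh w := by
    have hcw := Real.cosh_pos w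
    rw [show w - v = -(v - w) by ring, Real.cosh_neg, Real.cosh_sub]
    rw [← htanh, Real.tanh_eq_sinh_div_cosh]
    field_simp
  have hdia := diamond w hv.le
  rw [htanh] at hdia
  have hexp : exp (r*v) * (cosh v - r * sinh v) ≤ exp (v^2/2 - v^2*r^2/6) := by
    rw [hfrac]
    have hcwv := Real.cosh_pos (w - v)
    have hcw := Real.cosh_pos w
    have : exp (r*v) * (cosh (w-v) / cosh w) = exp (r*v + log (cosh (w-v)) - log (cosh w)) := by
      rw [exp_sub, exp_add, exp_log hcwv, exp_log hcw]
      ring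
    rw [this]
    apply exp_le_exp.mpr
    linarith [hdia]
  have hexpeq : v^2/2 - v^2*r^2/6 = -(a*b)/6 + (b-a)^2/12 := by
    rw [hab, hbb]
    ring
  rw [hLHS, ← hexpeq]
  exact mul_le_mul_of_nonneg_left hexp (by linarith)

end BDR

namespace BDR
open Real Set

/-- tangent point selector -/
noncomputable def U1 (vv b : ℝ) : ℝ := if 0 < b then -vv/b else -1

/-- quadratic coefficient -/
noncomputable def C2 (vv b : ℝ) : ℝ :=
  exp (U1 vv b) * ((exp (b - U1 vv b) - 1 - (b - U1 vv b))/(b - U1 vv b)^2)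

lemma U1_nonpos {vv b : ℝ} (hv : 0 ≤ vv) : U1 vv b ≤ 0 := by
  rw [U1]
  split_ifs with h
  · apply div_nonpos_of_nonpos_of_nonneg (by linarith) h.le
  · norm_num

lemma U1_lt {vv b : ℝ} (hv : 0 ≤ vv) (hb : 0 ≤ b) : U1 vv b < b := by
  rw [U1]
  split_ifs with h
  · exact lt_of_le_of_lt (div_nonpos_of_nonpos_of_nonneg (by linarith) h.le) h
  · have : b = 0 := le_antisymm (not_lt.1 h) hb
    rw [this]; norm_num

/-- the pointwise majorant inequality, specialised -/
lemma maj' {vv b u : ℝ} (hv : 0 ≤ vv) (hb : 0 ≤ b) (hub : u ≤ b) :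
    exp u ≤ exp (U1 vv b) * (1 + (u - U1 vv b)) + C2 vv b * (u - U1 vv b)^2 := by
  exact maj hub (U1_lt hv hb)

/-- the scalar inequality for the conditional-expectation value -/
lemma scalar {a b vv : ℝ} (ha : a ≤ 0) (hb : 0 ≤ b) (hv0 : 0 ≤ vv) (hvab : vv ≤ -(a*b)) :
    exp (U1 vv b) * (1 - U1 vv b) + C2 vv b * (vv + (U1 vv b)^2)
      ≤ exp ((2*vv + (b-a)^2)/12) := by
  rcases lt_or_ge 0 b with hbpos | hb0
  · -- b > 0
    have hu1 : U1 vv b = -vv/b := by rw [U1, if_pos hbpos]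
    have hu1a : a ≤ U1 vv b := by
      rw [hu1, le_div_iff₀ hbpos]
      nlinarith
    have hu10 : U1 vv b ≤ 0 := U1_nonpos hv0
    have hW : 0 < b - U1 vv b := by linarith
    rw [C2]
    set u := U1 vv b with hu
    have hveq : vv = -u * b := by
      rw [hu1]
      field_simp
    have heb : exp b = exp u * exp (b - u) := by
      rw [← exp_add]; ring_nf
    have hid : exp u * (1 - u) + exp u * ((exp (b-u) - 1 - (b-u))/(b-u)^2) * (vv + u^2)
        = (b * exp u - u * exp b)/(b - u) := by
      rw [heb, eq_div_iff hW.ne']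
      have hv2 : vv + u^2 = -u * (b - u) := by
        rw [hveq]; ring
      rw [hv2]
      field_simp
      ring
    rw [hid]
    have hcore := core (a := u) (b := b) hu10 hb
    rw [div_le_iff₀ hW]
    have hmono : exp (-(u * b)/6 + (b - u)^2/12) ≤ exp ((2*vv + (b-a)^2)/12) := by
      apply exp_le_exp.mpr
      have h1 : -(u * b)/6 = vv/6 := by rw [hveq]; ring
      have h2 : (b - u)^2 ≤ (b - a)^2 := by
        apply sq_le_sq'
        · nlinarith
        · nlinarith
      rw [h1]
      linarith
    calc b * exp u - u * exp b
        ≤ (b - u) * exp (-(u * b)/6 + (b - u)^2/12) := hcore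
      _ ≤ (b - u) * exp ((2*vv + (b-a)^2)/12) := mul_le_mul_of_nonneg_left hmono hW.le
      _ = exp ((2*vv + (b-a)^2)/12) * (b - u) := by ring
  · -- b ≤ 0, so b = 0 and vv = 0
    have hb00 : b = 0 := le_antisymm hb0 hb
    subst hb00
    have hvv0 : vv = 0 := by nlinarith
    subst hvv0
    have hu1 : U1 (0:ℝ) (0:ℝ) = -1 := by rw [U1]; norm_num
    rw [C2, hu1]
    norm_num
    have he : exp (-1) * 2 + exp (-1) * (exp 1 - 2) = 1 := by
      have h0 : exp (-1) * exp 1 = 1 := by rw [← exp_add]; norm_num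
      nlinarith [h0]
    have hrhs : (1:ℝ) ≤ exp (a^2/12) := one_le_exp (by positivity)
    nlinarith [he, hrhs]

end BDR

namespace BDR
open MeasureTheory Real Set

lemma gg_nonneg (W : ℝ) : 0 ≤ (exp W - 1 - W)/W^2 :=
  div_nonneg (by nlinarith [add_one_le_exp W]) (sq_nonneg W)

lemma gg_le {W K : ℝ} (hW : 0 < W) (hK : W ≤ K) :
    (exp W - 1 - W)/W^2 ≤ (exp K - 1 - K)/K^2 := by
  rw [div_le_div_iff₀ (pow_pos hW 2) (pow_pos (lt_of_lt_of_le hW hK) 2)]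
  exact gmono hK

lemma C2_nonneg {vv b : ℝ} : 0 ≤ C2 vv b :=
  mul_nonneg (exp_pos _).le (gg_nonneg _)

lemma U1_lb {a vv b Ca' : ℝ} (haC : -Ca' ≤ a) (ha : a ≤ 0) (hv0 : 0 ≤ vv)
    (hvab : vv ≤ -(a*b)) (hb : 0 ≤ b) : -(max Ca' 1) ≤ U1 vv b := by
  rw [U1]
  split_ifs with h
  · have h1 : vv/b ≤ -a := by
      rw [div_le_iff₀ h]
      nlinarith
    have h2 : -a ≤ Ca' := by linarith
    have : -(vv/b) ≥ -Ca' := by linarith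
    calc -(max Ca' 1) ≤ -Ca' := by simp [le_max_left]
      _ ≤ -(vv/b) := this
      _ = -vv/b := by ring
  · have : (1:ℝ) ≤ max Ca' 1 := le_max_right _ _
    linarith

lemma C2_le {vv b K : ℝ} (hv0 : 0 ≤ vv) (hb : 0 ≤ b) (hK : b - U1 vv b ≤ K) :
    C2 vv b ≤ (exp K - 1 - K)/K^2 := by
  have hW : 0 < b - U1 vv b := by linarith [U1_lt hv0 hb]
  have h1 : exp (U1 vv b) ≤ 1 := exp_le_one_iff.2 (U1_nonpos hv0)
  calc C2 vv b ≤ 1 * ((exp (b - U1 vv b) - 1 - (b - U1 vv b))/(b - U1 vv b)^2) := by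
        rw [C2]
        exact mul_le_mul_of_nonneg_right h1 (gg_nonneg _)
    _ = (exp (b - U1 vv b) - 1 - (b - U1 vv b))/(b - U1 vv b)^2 := one_mul _
    _ ≤ (exp K - 1 - K)/K^2 := gg_le hW hK

/-- The conditional-expectation step bound. -/
lemma step {Ω : Type*} {m0 : MeasurableSpace Ω} (μ : Measure Ω) [IsProbabilityMeasure μ]
    {m : MeasurableSpace Ω} (hm : m ≤ m0)
    (X a b : Ω → ℝ)
    (hX : Integrable X μ) (hX2 : Integrable (fun ω => X ω ^ 2) μ)
    (ham : StronglyMeasurable[m] a) (hbm : StronglyMeasurable[m] b)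
    {Ca Cb : ℝ} (haC : ∀ ω, |a ω| ≤ Ca) (hbC : ∀ ω, |b ω| ≤ Cb)
    (hab : ∀ᵐ ω ∂μ, a ω ≤ X ω ∧ X ω ≤ b ω)
    (hmean : μ[X|m] =ᵐ[μ] 0) :
    μ[fun ω => Real.exp (X ω)|m] ≤ᵐ[μ]
      fun ω => Real.exp ((2 * (μ[fun ω' => X ω' ^ 2|m]) ω + (b ω - a ω)^2)/12) := by
  haveI : SigmaFinite (μ.trim hm) := by infer_instance
  set Ca' : ℝ := max Ca 0 with hCa'
  set Cb' : ℝ := max Cb 0 with hCb'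
  have haC' : ∀ ω, |a ω| ≤ Ca' := fun ω => le_trans (haC ω) (le_max_left _ _)
  have hbC' : ∀ ω, |b ω| ≤ Cb' := fun ω => le_trans (hbC ω) (le_max_left _ _)
  have hCa'0 : 0 ≤ Ca' := le_max_right _ _
  have hCb'0 : 0 ≤ Cb' := le_max_right _ _
  set v : Ω → ℝ := μ[fun ω' => X ω' ^ 2|m] with hvdef
  have hvm : StronglyMeasurable[m] v := stronglyMeasurable_condExp
  have hv0 : 0 ≤ᵐ[μ] v := condExp_nonneg (ae_of_all _ fun ω => sq_nonneg _)
  have hamae : AEStronglyMeasurable[m0] a μ := (ham.mono hm).aestronglyMeasurable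
  have hbmae : AEStronglyMeasurable[m0] b μ := (hbm.mono hm).aestronglyMeasurable
  have hInta : Integrable a μ :=
    (integrable_const Ca').mono' hamae (ae_of_all _ fun ω => by simpa using haC' ω)
  have hIntb : Integrable b μ :=
    (integrable_const Cb').mono' hbmae (ae_of_all _ fun ω => by simpa using hbC' ω)
  -- a ≤ 0 ≤ b a.e.
  have ha0 : a ≤ᵐ[μ] 0 := by
    have h2 : μ[a|m] ≤ᵐ[μ] μ[X|m] := condExp_mono hInta hX (hab.mono fun ω h => h.1)
    rw [condExp_of_stronglyMeasurable hm ham hInta] at h2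
    filter_upwards [h2, hmean] with ω e2 e3
    simp only [Pi.zero_apply] at e3 ⊢
    rw [e3] at e2; exact e2
  have hb0 : (0:Ω → ℝ) ≤ᵐ[μ] b := by
    have h2 : μ[X|m] ≤ᵐ[μ] μ[b|m] := condExp_mono hX hIntb (hab.mono fun ω h => h.2)
    rw [condExp_of_stronglyMeasurable hm hbm hIntb] at h2
    filter_upwards [h2, hmean] with ω e2 e3
    simp only [Pi.zero_apply] at e3 ⊢
    rw [e3] at e2; exact e2
  -- v ≤ -(a b) a.e.
  have habint : Integrable (fun ω => a ω * b ω) μ :=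
    (integrable_const (Ca' * Cb')).mono' (hamae.mul hbmae) (ae_of_all _ fun ω => by
      rw [norm_eq_abs, abs_mul]
      exact mul_le_mul (haC' ω) (hbC' ω) (abs_nonneg _) hCa'0)
  have hsumX_int : Integrable (fun ω => (a ω + b ω) * X ω) μ :=
    Integrable.bdd_mul (c := Ca' + Cb') hX ((hamae.add hbmae))
      (ae_of_all _ fun ω => by
        rw [norm_eq_abs]
        calc |a ω + b ω| ≤ |a ω| + |b ω| := abs_add_le _ _
          _ ≤ Ca' + Cb' := add_le_add (haC' ω) (hbC' ω))
  have hvab : v ≤ᵐ[μ] fun ω => -(a ω * b ω) := by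
    have hsum_int : Integrable (fun ω => (a ω + b ω) * X ω - a ω * b ω) μ :=
      hsumX_int.sub habint
    have hmono := condExp_mono (m := m) hX2 hsum_int (hab.mono fun ω h => by
      show X ω ^ 2 ≤ (a ω + b ω) * X ω - a ω * b ω
      nlinarith [mul_nonneg (sub_nonneg.2 h.1) (sub_nonneg.2 h.2)])
    have hsub : μ[(fun ω => (a ω + b ω) * X ω - a ω * b ω)|m] =ᵐ[μ]
        μ[(fun ω => (a ω + b ω) * X ω)|m] - μ[(fun ω => a ω * b ω)|m] :=
      condExp_sub hsumX_int habint _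
    have hmul : μ[(fun ω => (a ω + b ω) * X ω)|m] =ᵐ[μ]
        fun ω => (a ω + b ω) * (μ[X|m]) ω := by
      have h := condExp_mul_of_stronglyMeasurable_left (ham.add hbm) hsumX_int hX
      exact h
    have habce : μ[(fun ω => a ω * b ω)|m] = fun ω => a ω * b ω :=
      condExp_of_stronglyMeasurable hm (ham.mul hbm) habint
    rw [habce] at hsub
    filter_upwards [hmono, hsub, hmul, hmean] with ω e1 e2 e3 e5
    simp only [Pi.sub_apply, Pi.zero_apply] at e1 e2 e3 e5 ⊢
    rw [e2, e3] at e1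
    rw [e5] at e1
    simpa using e1
  -- abbreviations
  set u1f : Ω → ℝ := fun ω => U1 (v ω) (b ω) with hu1f
  set c2f : Ω → ℝ := fun ω => C2 (v ω) (b ω) with hc2f
  set K : ℝ := Cb' + max Ca' 1 with hKdef
  have hKpos : 0 < K := by
    have : (1:ℝ) ≤ max Ca' 1 := le_max_right _ _
    simp only [hKdef]
    linarith
  set CC : ℝ := (exp K - 1 - K)/K^2 with hCC
  have hCC0 : 0 ≤ CC := gg_nonneg K
  -- measurability of u1f and c2f w.r.t. m
  have hu1m : StronglyMeasurable[m] u1f := by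
    have heq : u1f = fun ω => if 0 < b ω then -v ω / b ω else -1 := by
      funext ω
      simp only [hu1f, U1]
    rw [heq]
    apply Measurable.stronglyMeasurable
    exact Measurable.ite (measurableSet_lt measurable_const hbm.measurable)
      ((hvm.measurable.neg).div hbm.measurable) measurable_const
  have hWm : StronglyMeasurable[m] (fun ω => b ω - u1f ω) := hbm.sub hu1m
  have hc2m : StronglyMeasurable[m] c2f := by
    have heq : c2f = fun ω => exp (u1f ω) *
        ((exp (b ω - u1f ω) - 1 - (b ω - u1f ω))/(b ω - u1f ω)^2) := by
      funext ω
      simp only [hc2f, C2, hu1f]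
    rw [heq]
    apply Measurable.stronglyMeasurable
    exact (hu1m.measurable.exp).mul
      (((hWm.measurable.exp.sub measurable_const).sub hWm.measurable).div
        (hWm.measurable.pow measurable_const))
  -- a.e. bounds
  have hu1_le0 : ∀ᵐ ω ∂μ, u1f ω ≤ 0 := by
    filter_upwards [hv0] with ω h
    exact U1_nonpos h
  have hu1_lb : ∀ᵐ ω ∂μ, -(max Ca' 1) ≤ u1f ω := by
    filter_upwards [hv0, hvab, ha0, hb0] with ω h1 h2 h3 h4
    simp only [Pi.zero_apply] at h3 h4
    exact U1_lb (abs_le.1 (haC' ω)).1 h3 h1 h2 h4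
  have hWbd : ∀ᵐ ω ∂μ, 0 < b ω - u1f ω ∧ b ω - u1f ω ≤ K := by
    filter_upwards [hv0, hb0, hu1_lb] with ω h1 h2 h3
    simp only [Pi.zero_apply] at h2
    constructor
    · linarith [U1_lt h1 h2]
    · have := abs_le.1 (hbC' ω)
      simp only [hKdef]
      linarith
  have hc2_bd : ∀ᵐ ω ∂μ, 0 ≤ c2f ω ∧ c2f ω ≤ CC := by
    filter_upwards [hv0, hb0, hWbd] with ω h1 h2 h3
    simp only [Pi.zero_apply] at h2
    exact ⟨C2_nonneg, C2_le h1 h2 h3.2⟩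
  set CX : ℝ := max Ca' Cb' with hCX
  have hXbd : ∀ᵐ ω ∂μ, |X ω| ≤ CX := by
    filter_upwards [hab] with ω h
    have h1 := abs_le.1 (haC' ω)
    have h2 := abs_le.1 (hbC' ω)
    rw [abs_le]
    constructor
    · calc -CX ≤ -Ca' := by simp [hCX, le_max_left]
        _ ≤ a ω := h1.1
        _ ≤ X ω := h.1
    · calc X ω ≤ b ω := h.2
        _ ≤ Cb' := h2.2
        _ ≤ CX := le_max_right _ _
  -- integrability of exp X
  have hexpX_aesm : AEStronglyMeasurable[m0] (fun ω => exp (X ω)) μ :=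
    Real.continuous_exp.comp_aestronglyMeasurable hX.1
  have hexpX_int : Integrable (fun ω => exp (X ω)) μ := by
    apply (integrable_const (exp CX)).mono' hexpX_aesm
    filter_upwards [hXbd] with ω h
    rw [norm_eq_abs, abs_of_pos (exp_pos _)]
    exact exp_le_exp.2 (le_trans (le_abs_self _) h)
  -- the majorant q and its decomposition
  set f1 : Ω → ℝ := fun ω => exp (u1f ω) * (1 - u1f ω) + c2f ω * (u1f ω)^2 with hf1
  set f2 : Ω → ℝ := fun ω => exp (u1f ω) - 2 * c2f ω * u1f ω with hf2
  set q : Ω → ℝ := fun ω => f1 ω + (f2 ω * X ω + c2f ω * X ω ^ 2) with hq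
  have hf1m : StronglyMeasurable[m] f1 := by
    apply Measurable.stronglyMeasurable
    exact (hu1m.measurable.exp.mul (measurable_const.sub hu1m.measurable)).add
      (hc2m.measurable.mul (hu1m.measurable.pow measurable_const))
  have hf2m : StronglyMeasurable[m] f2 := by
    apply Measurable.stronglyMeasurable
    exact hu1m.measurable.exp.sub
      ((measurable_const.mul hc2m.measurable).mul hu1m.measurable)
  -- a.e. bounds on f1 f2
  set D : ℝ := max Ca' 1 with hD
  have hf1bd : ∀ᵐ ω ∂μ, ‖f1 ω‖ ≤ 1 * (1 + D) + CC * D^2 := by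
    filter_upwards [hu1_le0, hu1_lb, hc2_bd] with ω h1 h2 h3
    have he1 : exp (u1f ω) ≤ 1 := exp_le_one_iff.2 h1
    have he0 := exp_pos (u1f ω)
    have hD1 : (1:ℝ) ≤ D := le_max_right _ _
    have hu2 : (u1f ω)^2 ≤ D^2 := sq_le_sq' (by linarith) (by linarith)
    have hA : exp (u1f ω) * (1 - u1f ω) ≤ 1 * (1 + D) :=
      mul_le_mul he1 (by linarith) (by linarith) zero_le_one
    have hA0 : 0 ≤ exp (u1f ω) * (1 - u1f ω) := mul_nonneg he0.le (by linarith)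
    have hB : c2f ω * (u1f ω)^2 ≤ CC * D^2 := mul_le_mul h3.2 hu2 (sq_nonneg _) hCC0
    have hB0 : 0 ≤ c2f ω * (u1f ω)^2 := mul_nonneg h3.1 (sq_nonneg _)
    rw [norm_eq_abs, abs_le]
    constructor
    · simp only [hf1]
      nlinarith [hA, hA0, hB, hB0]
    · simp only [hf1]
      nlinarith [hA, hA0, hB, hB0]
  have hf2bd : ∀ᵐ ω ∂μ, ‖f2 ω‖ ≤ 1 + 2 * CC * D := by
    filter_upwards [hu1_le0, hu1_lb, hc2_bd] with ω h1 h2 h3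
    have he1 : exp (u1f ω) ≤ 1 := exp_le_one_iff.2 h1
    have he0 := exp_pos (u1f ω)
    have hD1 : (1:ℝ) ≤ D := le_max_right _ _
    have hB : c2f ω * (-u1f ω) ≤ CC * D := mul_le_mul h3.2 (by linarith) (by linarith) hCC0
    have hB0 : 0 ≤ c2f ω * (-u1f ω) := mul_nonneg h3.1 (by linarith)
    rw [norm_eq_abs, abs_le]
    constructor
    · simp only [hf2]
      nlinarith [hB, hB0]
    · simp only [hf2]
      nlinarith [hB, hB0]
  have hf1_int : Integrable f1 μ :=
    (integrable_const _).mono' (hf1m.mono hm).aestronglyMeasurable hf1bd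
  have hf2X_int : Integrable (fun ω => f2 ω * X ω) μ :=
    Integrable.bdd_mul (c := 1 + 2 * CC * D) hX (hf2m.mono hm).aestronglyMeasurable hf2bd
  have hc2X2_int : Integrable (fun ω => c2f ω * X ω ^ 2) μ :=
    Integrable.bdd_mul (c := CC) hX2 (hc2m.mono hm).aestronglyMeasurable
      (by filter_upwards [hc2_bd] with ω h; rw [norm_eq_abs, abs_of_nonneg h.1]; exact h.2)
  have hq_int : Integrable q μ := hf1_int.add (hf2X_int.add hc2X2_int)
  -- main chain
  have hstep1 : μ[fun ω => exp (X ω)|m] ≤ᵐ[μ] μ[q|m] := by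
    apply condExp_mono hexpX_int hq_int
    filter_upwards [hab, hv0, hb0] with ω h1 h2 h3
    simp only [Pi.zero_apply] at h3
    have hmj := maj' (vv := v ω) (b := b ω) (u := X ω) h2 h3 h1.2
    simp only [hq, hf1, hf2, hu1f, hc2f]
    refine le_trans hmj (le_of_eq ?_)
    ring
  have hceq : μ[q|m] =ᵐ[μ] fun ω => f1 ω + (f2 ω * (μ[X|m]) ω + c2f ω * v ω) := by
    have h1 : μ[q|m] =ᵐ[μ] μ[f1|m] + μ[(fun ω => f2 ω * X ω + c2f ω * X ω ^ 2)|m] := by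
      have : q = f1 + fun ω => f2 ω * X ω + c2f ω * X ω ^ 2 := rfl
      rw [this]
      exact condExp_add hf1_int (hf2X_int.add hc2X2_int) _
    have h2 : μ[(fun ω => f2 ω * X ω + c2f ω * X ω ^ 2)|m] =ᵐ[μ]
        μ[(fun ω => f2 ω * X ω)|m] + μ[(fun ω => c2f ω * X ω ^ 2)|m] :=
      condExp_add hf2X_int hc2X2_int _
    have h3 : μ[(fun ω => f2 ω * X ω)|m] =ᵐ[μ] fun ω => f2 ω * (μ[X|m]) ω :=
      condExp_mul_of_stronglyMeasurable_left hf2m hf2X_int hX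
    have h4 : μ[(fun ω => c2f ω * X ω ^ 2)|m] =ᵐ[μ] fun ω => c2f ω * v ω :=
      condExp_mul_of_stronglyMeasurable_left hc2m hc2X2_int hX2
    have h5 : μ[f1|m] = f1 := condExp_of_stronglyMeasurable hm hf1m hf1_int
    rw [h5] at h1
    filter_upwards [h1, h2, h3, h4] with ω e1 e2 e3 e4
    simp only [Pi.add_apply] at e1 e2 ⊢
    rw [e1, e2, e3, e4]
  have hfinal : (fun ω => f1 ω + (f2 ω * (μ[X|m]) ω + c2f ω * v ω)) ≤ᵐ[μ]
      fun ω => Real.exp ((2 * v ω + (b ω - a ω)^2)/12) := by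
    filter_upwards [hmean, hv0, hvab, ha0, hb0] with ω e1 e2 e3 e4 e5
    simp only [Pi.zero_apply] at e1 e4 e5
    rw [e1, mul_zero]
    have hsc := scalar (a := a ω) (b := b ω) (vv := v ω) e4 e5 e2 (by linarith [e3])
    simp only [hf1, hc2f, hu1f]
    refine le_trans (le_of_eq ?_) hsc
    ring
  calc μ[fun ω => exp (X ω)|m] ≤ᵐ[μ] μ[q|m] := hstep1
    _ ≤ᵐ[μ] fun ω => Real.exp ((2 * v ω + (b ω - a ω)^2)/12) := hceq.trans_le hfinal

end BDR

namespace BDR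
open MeasureTheory Finset Real

/-- per-increment conditional mgf bound, packaged for the main theorem -/
lemma hstep_lemma {Ω : Type*} {m0 : MeasurableSpace Ω} (μ : Measure Ω)
    [IsProbabilityMeasure μ] (ℱ : Filtration ℕ m0)
    (M : ℕ → Ω → ℝ) (hM : Martingale M ℱ μ)
    (hMsq : ∀ n, Integrable (fun ω => (M n ω) ^ 2) μ)
    (A B : ℕ → Ω → ℝ) (j : ℕ)
    (hAm : StronglyMeasurable[ℱ j] (A (j+1))) (hBm : StronglyMeasurable[ℱ j] (B (j+1)))
    {cA cB : ℝ} (hcA : ∀ ω, |A (j+1) ω| ≤ cA) (hcB : ∀ ω, |B (j+1) ω| ≤ cB)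
    (hsand : ∀ᵐ ω ∂μ, A (j+1) ω ≤ M (j+1) ω - M j ω ∧ M (j+1) ω - M j ω ≤ B (j+1) ω)
    {t : ℝ} (ht : 0 < t) :
    μ[fun ω => Real.exp (t * (M (j+1) ω - M j ω))|ℱ j] ≤ᵐ[μ]
      fun ω => Real.exp (t^2/12 * (2 * (μ[fun ω' => (M (j+1) ω' - M j ω') ^ 2|ℱ j]) ω
        + (B (j+1) ω - A (j+1) ω)^2)) := by
  have hΔint : Integrable (fun ω => M (j+1) ω - M j ω) μ :=
    (hM.integrable (j+1)).sub (hM.integrable j)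
  have hΔaesm : AEStronglyMeasurable (fun ω => M (j+1) ω - M j ω) μ := hΔint.1
  have hΔ2aesm : AEStronglyMeasurable (fun ω => (M (j+1) ω - M j ω)^2) μ := by
    refine (hΔaesm.mul hΔaesm).congr (ae_of_all _ fun ω => ?_)
    simp [pow_two]
  have hΔ2int : Integrable (fun ω => (M (j+1) ω - M j ω)^2) μ := by
    refine Integrable.mono' (((hMsq (j+1)).const_mul 2).add ((hMsq j).const_mul 2)) hΔ2aesm
      (ae_of_all _ fun ω => ?_)
    simp only [Pi.add_apply]
    rw [Real.norm_eq_abs, abs_of_nonneg (sq_nonneg _)]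
    nlinarith [sq_nonneg (M (j+1) ω + M j ω)]
  -- mean zero
  have hmean0 : μ[fun ω => M (j+1) ω - M j ω|ℱ j] =ᵐ[μ] 0 := by
    have hsub : μ[fun ω => M (j+1) ω - M j ω|ℱ j] =ᵐ[μ]
        μ[M (j+1)|ℱ j] - μ[M j|ℱ j] :=
      condExp_sub (hM.integrable (j+1)) (hM.integrable j) _
    have h1 : μ[M (j+1)|ℱ j] =ᵐ[μ] M j := hM.condExp_ae_eq (Nat.le_succ j)
    have h2 : μ[M j|ℱ j] =ᵐ[μ] M j := hM.condExp_ae_eq (le_refl j)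
    filter_upwards [hsub, h1, h2] with ω e1 e2 e3
    simp only [Pi.sub_apply, Pi.zero_apply] at e1 e2 e3 ⊢
    rw [e1, e2, e3]
    ring
  -- apply the step lemma to the scaled increment
  have hXint : Integrable (fun ω => t * (M (j+1) ω - M j ω)) μ := hΔint.const_mul t
  have hX2int : Integrable (fun ω => (t * (M (j+1) ω - M j ω))^2) μ := by
    refine (hΔ2int.const_mul (t^2)).congr (ae_of_all _ fun ω => ?_)
    ring
  have hamt : StronglyMeasurable[ℱ j] (fun ω => t * A (j+1) ω) :=
    (hAm.measurable.const_mul t).stronglyMeasurable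
  have hbmt : StronglyMeasurable[ℱ j] (fun ω => t * B (j+1) ω) :=
    (hBm.measurable.const_mul t).stronglyMeasurable
  have habt : ∀ᵐ ω ∂μ, t * A (j+1) ω ≤ t * (M (j+1) ω - M j ω) ∧
      t * (M (j+1) ω - M j ω) ≤ t * B (j+1) ω := by
    filter_upwards [hsand] with ω h
    exact ⟨mul_le_mul_of_nonneg_left h.1 ht.le, mul_le_mul_of_nonneg_left h.2 ht.le⟩
  have hmeant : μ[fun ω => t * (M (j+1) ω - M j ω)|ℱ j] =ᵐ[μ] 0 := by
    have hs : μ[fun ω => t * (M (j+1) ω - M j ω)|ℱ j] =ᵐ[μ]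
        t • μ[fun ω => M (j+1) ω - M j ω|ℱ j] := condExp_smul t _ _
    filter_upwards [hs, hmean0] with ω e1 e2
    simp only [Pi.smul_apply, smul_eq_mul, Pi.zero_apply] at e1 e2 ⊢
    rw [e1, e2, mul_zero]
  have haCt : ∀ ω, |t * A (j+1) ω| ≤ t * cA := fun ω => by
    rw [abs_mul, abs_of_pos ht]
    exact mul_le_mul_of_nonneg_left (hcA ω) ht.le
  have hbCt : ∀ ω, |t * B (j+1) ω| ≤ t * cB := fun ω => by
    rw [abs_mul, abs_of_pos ht]
    exact mul_le_mul_of_nonneg_left (hcB ω) ht.le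
  have hkey := step μ (ℱ.le j) (fun ω => t * (M (j+1) ω - M j ω))
    (fun ω => t * A (j+1) ω) (fun ω => t * B (j+1) ω)
    hXint hX2int hamt hbmt haCt hbCt habt hmeant
  -- identify the conditional second moment
  have hce : μ[fun ω' => (t * (M (j+1) ω' - M j ω'))^2|ℱ j] =ᵐ[μ]
      fun ω => t^2 * (μ[fun ω' => (M (j+1) ω' - M j ω') ^ 2|ℱ j]) ω := by
    have heqf : (fun ω' => (t * (M (j+1) ω' - M j ω'))^2)
        = fun ω' => t^2 * (M (j+1) ω' - M j ω')^2 := by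
      funext ω'; ring
    rw [heqf]
    have hs : μ[fun ω' => t^2 * (M (j+1) ω' - M j ω')^2|ℱ j] =ᵐ[μ]
        t^2 • μ[fun ω' => (M (j+1) ω' - M j ω')^2|ℱ j] := condExp_smul (t^2) _ _
    filter_upwards [hs] with ω e1
    simp only [Pi.smul_apply, smul_eq_mul] at e1 ⊢
    exact e1
  filter_upwards [hkey, hce] with ω e1 e2
  rw [e2] at e1
  refine le_trans e1 (le_of_eq ?_)
  congr 1
  ring

end BDR

open MeasureTheory Finset

/-- The Bercu–Delyon–Rio martingale concentration inequality (Lemma 10): for a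
square-integrable martingale `M` with `M 0 = 0`, if each increment `ΔM_k` lies a.s.
between bounded `ℱ_{k-1}`-measurable bounds `A_k ≤ B_k`, then with
`⟨M⟩_n = ∑_{k≤n} E[(ΔM_k)² | ℱ_{k-1}]` and `D_n = ∑_{k≤n} (B_k - A_k)²`,
`P(M_n ≥ x, 2⟨M⟩_n + D_n ≤ y) ≤ exp(-3x²/y)` for all `x, y > 0`. -/
theorem stmt_11 {Ω : Type*} {m0 : MeasurableSpace Ω} (μ : Measure Ω)
    [IsProbabilityMeasure μ] (ℱ : Filtration ℕ m0)
    (M : ℕ → Ω → ℝ) (hM : Martingale M ℱ μ) (hM0 : ∀ ω, M 0 ω = 0)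
    (hMsq : ∀ n, Integrable (fun ω => (M n ω) ^ 2) μ)
    (n : ℕ) (hn : 1 ≤ n)
    (A B : ℕ → Ω → ℝ)
    (hAmeas : ∀ k, 1 ≤ k → k ≤ n → StronglyMeasurable[ℱ (k - 1)] (A k))
    (hBmeas : ∀ k, 1 ≤ k → k ≤ n → StronglyMeasurable[ℱ (k - 1)] (B k))
    (hAbd : ∀ k, 1 ≤ k → k ≤ n → ∃ c : ℝ, ∀ ω, |A k ω| ≤ c)
    (hBbd : ∀ k, 1 ≤ k → k ≤ n → ∃ c : ℝ, ∀ ω, |B k ω| ≤ c)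
    (hsandwich : ∀ k, 1 ≤ k → k ≤ n → ∀ᵐ ω ∂μ,
      A k ω ≤ M k ω - M (k - 1) ω ∧ M k ω - M (k - 1) ω ≤ B k ω)
    (x y : ℝ) (hx : 0 < x) (hy : 0 < y) :
    μ {ω | x ≤ M n ω ∧
        2 * (∑ k ∈ Finset.Icc 1 n,
              (μ[fun ω' => (M k ω' - M (k - 1) ω') ^ 2 | ℱ (k - 1)]) ω) +
          (∑ k ∈ Finset.Icc 1 n, (B k ω - A k ω) ^ 2) ≤ y} ≤
      ENNReal.ofReal (Real.exp (-3 * x ^ 2 / y)) := by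
  classical
  have hne : Nonempty Ω := by
    by_contra h
    rw [not_nonempty_iff] at h
    have h1 : μ Set.univ = 1 := measure_univ
    rw [Set.univ_eq_empty_iff.mpr h, measure_empty] at h1
    exact zero_ne_one h1
  set t : ℝ := 6 * x / y with htdef
  have ht : 0 < t := by positivity
  set V : ℕ → Ω → ℝ := fun j => μ[fun ω' => (M (j+1) ω' - M j ω') ^ 2 | ℱ j] with hVdef
  set R : ℕ → Ω → ℝ :=
    fun k ω => ∑ j ∈ Finset.range k, (2 * V j ω + (B (j+1) ω - A (j+1) ω)^2) with hRdef
  set Z : ℕ → Ω → ℝ := fun k ω => Real.exp (t * M k ω - t^2/12 * R k ω) with hZdef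
  have hV0 : ∀ j, 0 ≤ᵐ[μ] V j := fun j => condExp_nonneg (ae_of_all _ fun ω => sq_nonneg _)
  have hR0 : ∀ k, ∀ᵐ ω ∂μ, 0 ≤ R k ω := by
    intro k
    induction k with
    | zero =>
      refine ae_of_all _ fun ω => ?_
      simp [hRdef]
    | succ k ih =>
      filter_upwards [ih, hV0 k] with ω h1 h2
      simp only [Pi.zero_apply] at h2
      simp only [hRdef] at h1 ⊢
      rw [Finset.sum_range_succ]
      nlinarith [sq_nonneg (B (k+1) ω - A (k+1) ω)]
  -- a.e. boundedness of M k for k ≤ n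
  have hMbd : ∀ k, k ≤ n → ∃ C : ℝ, 0 ≤ C ∧ ∀ᵐ ω ∂μ, |M k ω| ≤ C := by
    intro k
    induction k with
    | zero => exact fun _ => ⟨0, le_refl 0, ae_of_all _ fun ω => by simp [hM0 ω]⟩
    | succ k ih =>
      intro hk
      obtain ⟨C, hC0, hC⟩ := ih (by omega)
      obtain ⟨cA, hcA⟩ := hAbd (k+1) (by omega) hk
      obtain ⟨cB, hcB⟩ := hBbd (k+1) (by omega) hk
      have hcA0 : 0 ≤ cA := le_trans (abs_nonneg _) (hcA (Classical.arbitrary Ω))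
      have hcB0 : 0 ≤ cB := le_trans (abs_nonneg _) (hcB (Classical.arbitrary Ω))
      refine ⟨C + cA + cB, by linarith, ?_⟩
      have hsand := hsandwich (k+1) (by omega) hk
      simp only [Nat.add_sub_cancel] at hsand
      filter_upwards [hC, hsand] with ω h1 h2
      have h3 := abs_le.1 (hcA ω)
      have h4 := abs_le.1 (hcB ω)
      have h5 := abs_le.1 h1
      rw [abs_le]
      constructor <;> nlinarith [h2.1, h2.2]
  -- strong measurability of Z k (for k ≤ n)
  have hZaesm : ∀ k, k ≤ n → AEStronglyMeasurable (Z k) μ := by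
    intro k hk
    have hRm : Measurable (R k) := by
      apply Finset.measurable_sum
      intro j hj
      have hjk : j < k := Finset.mem_range.1 hj
      have hVj : Measurable (V j) := (stronglyMeasurable_condExp.mono (ℱ.le j)).measurable
      have hBj : Measurable (B (j+1)) := by
        have := hBmeas (j+1) (by omega) (by omega)
        simpa using ((this.mono (ℱ.le (j+1-1))).measurable)
      have hAj : Measurable (A (j+1)) := by
        have := hAmeas (j+1) (by omega) (by omega)
        simpa using ((this.mono (ℱ.le (j+1-1))).measurable)
      exact (hVj.const_mul 2).add (((hBj.sub hAj).pow measurable_const))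
    have hMm : Measurable (M k) := ((hM.stronglyAdapted k).mono (ℱ.le k)).measurable
    apply Measurable.aestronglyMeasurable
    exact ((hMm.const_mul t).sub (hRm.const_mul (t^2/12))).exp
  have hZint : ∀ k, k ≤ n → Integrable (Z k) μ := by
    intro k hk
    obtain ⟨C, hC0, hC⟩ := hMbd k hk
    refine (integrable_const (Real.exp (t * C))).mono' (hZaesm k hk) ?_
    filter_upwards [hC, hR0 k] with ω h1 h2
    rw [Real.norm_eq_abs, abs_of_pos (Real.exp_pos _)]
    apply Real.exp_le_exp.2
    have := abs_le.1 h1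
    nlinarith [mul_le_mul_of_nonneg_left this.2 ht.le, sq_nonneg t]
  -- the supermartingale induction
  have hZ1 : ∀ k, k ≤ n → ∫ ω, Z k ω ∂μ ≤ 1 := by
    intro k
    induction k with
    | zero =>
      intro _
      have hz : Z 0 = fun _ => 1 := by
        funext ω
        simp [hZdef, hRdef, hM0 ω]
      rw [hz]
      simp
    | succ k ih =>
      intro hk
      have hkn : k ≤ n := by omega
      obtain ⟨cA, hcA⟩ := hAbd (k+1) (by omega) hk
      obtain ⟨cB, hcB⟩ := hBbd (k+1) (by omega) hk
      have hcA0 : 0 ≤ cA := le_trans (abs_nonneg _) (hcA (Classical.arbitrary Ω))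
      have hcB0 : 0 ≤ cB := le_trans (abs_nonneg _) (hcB (Classical.arbitrary Ω))
      have hAm : StronglyMeasurable[ℱ k] (A (k+1)) := by
        have := hAmeas (k+1) (by omega) hk
        simpa using this
      have hBm : StronglyMeasurable[ℱ k] (B (k+1)) := by
        have := hBmeas (k+1) (by omega) hk
        simpa using this
      have hsand := hsandwich (k+1) (by omega) hk
      simp only [Nat.add_sub_cancel] at hsand
      have hstep := BDR.hstep_lemma μ ℱ M hM hMsq A B k hAm hBm hcA hcB hsand ht
      set Y : Ω → ℝ := fun ω => Real.exp (t * M k ω - t^2/12 * R (k+1) ω) with hYdef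
      have hYm : StronglyMeasurable[ℱ k] Y := by
        apply Measurable.stronglyMeasurable
        have hRm : Measurable[ℱ k] (R (k+1)) := by
          apply Finset.measurable_sum
          intro j hj
          have hjk : j ≤ k := by
            have := Finset.mem_range.1 hj
            omega
          have hVj : Measurable[ℱ k] (V j) :=
            (stronglyMeasurable_condExp.mono (ℱ.mono hjk)).measurable
          have hBj : Measurable[ℱ k] (B (j+1)) := by
            have h1 := hBmeas (j+1) (by omega) (by omega)
            change StronglyMeasurable[ℱ j] (B (j+1)) at h1
            exact (h1.mono (ℱ.mono hjk)).measurable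
          have hAj : Measurable[ℱ k] (A (j+1)) := by
            have h1 := hAmeas (j+1) (by omega) (by omega)
            change StronglyMeasurable[ℱ j] (A (j+1)) at h1
            exact (h1.mono (ℱ.mono hjk)).measurable
          exact (hVj.const_mul 2).add ((hBj.sub hAj).pow measurable_const)
        have hMk : Measurable[ℱ k] (M k) := (hM.stronglyAdapted k).measurable
        exact ((hMk.const_mul t).sub (hRm.const_mul (t^2/12))).exp
      -- the increment exponential
      have hΔbd : ∀ᵐ ω ∂μ, |M (k+1) ω - M k ω| ≤ cA + cB := by
        filter_upwards [hsand] with ω h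
        have h3 := abs_le.1 (hcA ω)
        have h4 := abs_le.1 (hcB ω)
        rw [abs_le]
        constructor <;> nlinarith [h.1, h.2]
      have hexpΔaesm : AEStronglyMeasurable (fun ω => Real.exp (t * (M (k+1) ω - M k ω))) μ := by
        apply Measurable.aestronglyMeasurable
        have h1 : Measurable (M (k+1)) := ((hM.stronglyAdapted (k+1)).mono (ℱ.le (k+1))).measurable
        have h2 : Measurable (M k) := ((hM.stronglyAdapted k).mono (ℱ.le k)).measurable
        exact ((h1.sub h2).const_mul t).exp
      have hexpΔint : Integrable (fun ω => Real.exp (t * (M (k+1) ω - M k ω))) μ := by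
        refine (integrable_const (Real.exp (t * (cA + cB)))).mono' hexpΔaesm ?_
        filter_upwards [hΔbd] with ω h
        rw [Real.norm_eq_abs, abs_of_pos (Real.exp_pos _)]
        apply Real.exp_le_exp.2
        have := abs_le.1 h
        exact mul_le_mul_of_nonneg_left this.2 ht.le
      have hZfact : Z (k+1) = fun ω => Y ω * Real.exp (t * (M (k+1) ω - M k ω)) := by
        funext ω
        simp only [hZdef, hYdef]
        rw [← Real.exp_add]
        congr 1
        ring
      have hZk1int : Integrable (fun ω => Y ω * Real.exp (t * (M (k+1) ω - M k ω))) μ := by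
        rw [← hZfact]
        exact hZint (k+1) hk
      have hpull : μ[fun ω => Y ω * Real.exp (t * (M (k+1) ω - M k ω))|ℱ k] =ᵐ[μ]
          fun ω => Y ω * (μ[fun ω' => Real.exp (t * (M (k+1) ω' - M k ω'))|ℱ k]) ω :=
        condExp_mul_of_stronglyMeasurable_left hYm hZk1int hexpΔint
      have hWint : Integrable
          (fun ω => Y ω * (μ[fun ω' => Real.exp (t * (M (k+1) ω' - M k ω'))|ℱ k]) ω) μ :=
        integrable_condExp.congr hpull
      -- identity Z k = Y * exp(bound)
      have hZkid : Z k = fun ω =>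
          Y ω * Real.exp (t^2/12 * (2 * V k ω + (B (k+1) ω - A (k+1) ω)^2)) := by
        funext ω
        simp only [hZdef, hYdef]
        rw [← Real.exp_add]
        congr 1
        simp only [hRdef, Finset.sum_range_succ]
        ring
      calc ∫ ω, Z (k+1) ω ∂μ = ∫ ω, (μ[Z (k+1)|ℱ k]) ω ∂μ := (integral_condExp (ℱ.le k)).symm
        _ = ∫ ω, Y ω * (μ[fun ω' => Real.exp (t * (M (k+1) ω' - M k ω'))|ℱ k]) ω ∂μ := by
            apply integral_congr_ae
            rw [hZfact]
            exact hpull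
        _ ≤ ∫ ω, Z k ω ∂μ := by
            apply integral_mono_ae hWint (hZint k hkn)
            filter_upwards [hstep] with ω h1
            rw [hZkid]
            exact mul_le_mul_of_nonneg_left h1 (Real.exp_pos _).le
        _ ≤ 1 := ih hkn
  -- Markov's inequality and conclusion
  set c0 : ℝ := t*x - t^2/12*y with hc0def
  have hIcc : ∀ g : ℕ → ℝ, ∑ k ∈ Finset.Icc 1 n, g k = ∑ j ∈ Finset.range n, g (j+1) := by
    intro g
    rw [← Finset.Ico_add_one_right_eq_Icc, Finset.sum_Ico_eq_sum_range]
    simp [add_comm]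
  have hsubset : {ω | x ≤ M n ω ∧
        2 * (∑ k ∈ Finset.Icc 1 n,
              (μ[fun ω' => (M k ω' - M (k - 1) ω') ^ 2 | ℱ (k - 1)]) ω) +
          (∑ k ∈ Finset.Icc 1 n, (B k ω - A k ω) ^ 2) ≤ y} ⊆
      {ω | Real.exp c0 ≤ Z n ω} := by
    intro ω hω
    obtain ⟨h1, h2⟩ := hω
    have hs1 : ∑ k ∈ Finset.Icc 1 n, (μ[fun ω' => (M k ω' - M (k - 1) ω') ^ 2 | ℱ (k - 1)]) ω
        = ∑ j ∈ Finset.range n, V j ω := by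
      rw [hIcc (fun k => (μ[fun ω' => (M k ω' - M (k - 1) ω') ^ 2 | ℱ (k - 1)]) ω)]
      apply Finset.sum_congr rfl
      intro j _
      simp only [hVdef, Nat.add_sub_cancel]
    have hs2 : ∑ k ∈ Finset.Icc 1 n, (B k ω - A k ω) ^ 2
        = ∑ j ∈ Finset.range n, (B (j+1) ω - A (j+1) ω) ^ 2 := by
      rw [hIcc (fun k => (B k ω - A k ω) ^ 2)]
    have hRn : R n ω ≤ y := by
      simp only [hRdef]
      rw [Finset.sum_add_distrib]
      rw [hs1, hs2] at h2
      rw [Finset.mul_sum] at h2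
      linarith
    show Real.exp c0 ≤ Z n ω
    simp only [hZdef, hc0def]
    apply Real.exp_le_exp.2
    have hmx : t * x ≤ t * M n ω := mul_le_mul_of_nonneg_left h1 ht.le
    have hr : t^2/12 * R n ω ≤ t^2/12 * y := mul_le_mul_of_nonneg_left hRn (by positivity)
    linarith
  have hmark := mul_meas_ge_le_integral_of_nonneg (μ := μ) (f := Z n)
    (ae_of_all _ fun ω => (Real.exp_pos _).le) (hZint n le_rfl) (Real.exp c0)
  have hS : μ {ω | Real.exp c0 ≤ Z n ω} ≤ ENNReal.ofReal (Real.exp (-c0)) := by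
    have htop : μ {ω | Real.exp c0 ≤ Z n ω} ≠ ⊤ := measure_ne_top μ _
    have h4 : (μ {ω | Real.exp c0 ≤ Z n ω}).toReal ≤ Real.exp (-c0) := by
      have h5 := le_trans hmark (hZ1 n le_rfl)
      simp only [measureReal_def] at h5
      rw [Real.exp_neg]
      rw [← one_div]
      rw [le_div_iff₀ (Real.exp_pos c0)]
      linarith [h5]
    calc μ {ω | Real.exp c0 ≤ Z n ω}
        = ENNReal.ofReal ((μ {ω | Real.exp c0 ≤ Z n ω}).toReal) :=
          (ENNReal.ofReal_toReal htop).symm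
      _ ≤ ENNReal.ofReal (Real.exp (-c0)) := ENNReal.ofReal_le_ofReal h4
  calc μ {ω | x ≤ M n ω ∧
        2 * (∑ k ∈ Finset.Icc 1 n,
              (μ[fun ω' => (M k ω' - M (k - 1) ω') ^ 2 | ℱ (k - 1)]) ω) +
          (∑ k ∈ Finset.Icc 1 n, (B k ω - A k ω) ^ 2) ≤ y}
      ≤ μ {ω | Real.exp c0 ≤ Z n ω} := measure_mono hsubset
    _ ≤ ENNReal.ofReal (Real.exp (-c0)) := hS
    _ = ENNReal.ofReal (Real.exp (-3 * x ^ 2 / y)) := by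
        congr 2
        simp only [hc0def, htdef]
        field_simp
        ring
end

section
/- Let (q_k)_{k≥1} be adapted to (F_{k−1}) (each q_k is F_{k−1}-measurable), let W_k : X → ℝ be F_{k−1}-measurable functions, and let W : X → ℝ be a fixed function such that W(X) has a Lebesgue density bounded by C > 0, where (X_k) are iid copies of X with X_k independent of F_{k−1}. Then for every δ > 0 and every k: |P(W_k(X_k) > q_k | F_{k−1}) − P(W(X_k) > q_k | F_{k−1})| ≤ C·δ + P(|W_k(X_k) − W(X_k)| > δ | F_{k−1}), almost surely. -/
open MeasureTheory ProbabilityTheory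

section Aux

variable {Ω 𝓧 : Type*} [MeasurableSpace 𝓧]

/-- Auxiliary: integrability of indicators. -/
lemma aux_indint_stmt13 {Ω : Type*} [m0 : MeasurableSpace Ω] (μ : Measure Ω)
    [IsFiniteMeasure μ] (S : Set Ω) (hS : MeasurableSet S) :
    Integrable (S.indicator fun _ => (1:ℝ)) μ :=
  (integrable_const (1:ℝ)).indicator hS

/-- Auxiliary: product-measure bound via section estimates. -/
lemma aux_prod_bound_stmt13 {A B : Type*} [MeasurableSpace A] [MeasurableSpace B]
    (ν₁ : Measure A) (ν₂ : Measure B) [SFinite ν₁] [SFinite ν₂]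
    (E : Set (A × B)) (hE : MeasurableSet E) (s : Set B) (hs : MeasurableSet s) (c : ENNReal)
    (hsec : ∀ b, ν₁ ((fun x => (x, b)) ⁻¹' E) ≤ s.indicator (fun _ => c) b) :
    (ν₁.prod ν₂) E ≤ c * ν₂ s := by
  rw [Measure.prod_apply_symm hE]
  calc ∫⁻ b, ν₁ ((fun x => (x, b)) ⁻¹' E) ∂ν₂
      ≤ ∫⁻ b, s.indicator (fun _ => c) b ∂ν₂ := lintegral_mono hsec
    _ = c * ν₂ s := by rw [lintegral_indicator hs, setLIntegral_const]

/-- Auxiliary: under independence, the probability that `W (X ω)` falls in a small interval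
with `m`-measurable endpoints, intersected with an `m`-measurable set, is controlled. -/
lemma aux_key_stmt13 (m : MeasurableSpace Ω) (m0 : MeasurableSpace Ω)
    (hm : m ≤ m0) (μ : Measure Ω) [IsProbabilityMeasure μ]
    (X : Ω → 𝓧) (hX : Measurable X)
    (hindep : Indep (MeasurableSpace.comap X inferInstance) m μ)
    (W : 𝓧 → ℝ) (hW : Measurable W)
    (c : ENNReal) (δ : ℝ)
    (hdens : ∀ a : ℝ, μ ((fun ω => W (X ω)) ⁻¹' Set.Ioc a (a + δ)) ≤ c)
    (a : Ω → ℝ) (ha : Measurable[m] a) (s : Set Ω) (hs : MeasurableSet[m] s) :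
    μ ({ω | W (X ω) ∈ Set.Ioc (a ω) (a ω + δ)} ∩ s) ≤ c * μ s := by
  have hid : @Measurable Ω Ω m0 m id := measurable_id'' hm
  have hidae : @AEMeasurable Ω Ω m m0 id μ := @Measurable.aemeasurable Ω Ω m0 m id μ hid
  haveI hP2 : IsProbabilityMeasure (@Measure.map Ω Ω m0 m id μ) := by
    constructor
    rw [@Measure.map_apply Ω Ω m0 m μ id hid Set.univ (@MeasurableSet.univ Ω m)]
    simp
  have hXY : @IndepFun Ω 𝓧 Ω m0 _ m X id μ := by
    rw [← MeasurableSpace.comap_id (m := m)] at hindep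
    exact hindep
  have hmap := (ProbabilityTheory.indepFun_iff_map_prod_eq_prod_map_map
    (μ := μ) hX.aemeasurable hidae).mp hXY
  simp only [id_eq] at hmap
  set E : Set (𝓧 × Ω) :=
    {p : 𝓧 × Ω | (a p.2 < W p.1 ∧ W p.1 ≤ a p.2 + δ) ∧ p.2 ∈ s} with hE
  have hEmeas : MeasurableSet[@Prod.instMeasurableSpace 𝓧 Ω _ m] E := by
    have h1 : @Measurable (𝓧 × Ω) ℝ (@Prod.instMeasurableSpace 𝓧 Ω _ m) _
        (fun p => W p.1) := hW.comp measurable_fst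
    have h2 : @Measurable (𝓧 × Ω) ℝ (@Prod.instMeasurableSpace 𝓧 Ω _ m) _
        (fun p => a p.2) := ha.comp measurable_snd
    have h3 : @Measurable (𝓧 × Ω) ℝ (@Prod.instMeasurableSpace 𝓧 Ω _ m) _
        (fun p => a p.2 + δ) := h2.add measurable_const
    exact ((measurableSet_lt h2 h1).inter (measurableSet_le h1 h3)).inter
      (measurable_snd hs)
  have hpre : {ω | W (X ω) ∈ Set.Ioc (a ω) (a ω + δ)} ∩ s
      = (fun ω => (X ω, ω)) ⁻¹' E := by
    ext ω
    simp only [hE, Set.mem_inter_iff, Set.mem_setOf_eq, Set.mem_preimage, Set.mem_Ioc]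
  have hpairmeas : @Measurable Ω (𝓧 × Ω) m0 (@Prod.instMeasurableSpace 𝓧 Ω _ m)
      (fun ω => (X ω, ω)) := Measurable.prodMk hX hid
  rw [hpre, ← @Measure.map_apply Ω (𝓧 × Ω) m0 (@Prod.instMeasurableSpace 𝓧 Ω _ m) μ
    (fun ω => (X ω, ω)) hpairmeas E hEmeas, hmap]
  haveI hP1 : IsProbabilityMeasure (μ.map X) := Measure.isProbabilityMeasure_map hX.aemeasurable
  have hsec : ∀ ω : Ω, (μ.map X) ((fun x => (x, ω)) ⁻¹' E)
      ≤ Set.indicator s (fun _ => c) ω := by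
    intro ω
    by_cases hω : ω ∈ s
    · have hsub : (fun x => (x, ω)) ⁻¹' E ⊆ (fun x => W x) ⁻¹' Set.Ioc (a ω) (a ω + δ) := by
        intro x hx
        simp only [hE, Set.mem_preimage, Set.mem_setOf_eq] at hx
        exact ⟨hx.1.1, hx.1.2⟩
      calc (μ.map X) ((fun x => (x, ω)) ⁻¹' E)
          ≤ (μ.map X) ((fun x => W x) ⁻¹' Set.Ioc (a ω) (a ω + δ)) := measure_mono hsub
        _ = μ ((fun ω' => W (X ω')) ⁻¹' Set.Ioc (a ω) (a ω + δ)) :=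
            Measure.map_apply hX (hW measurableSet_Ioc)
        _ ≤ c := hdens (a ω)
        _ = Set.indicator s (fun _ => c) ω := (Set.indicator_of_mem hω (fun _ => c)).symm
    · have hemp : (fun x => (x, ω)) ⁻¹' E = ∅ := by
        ext x; simp [hE, hω]
      rw [hemp, Set.indicator_of_notMem hω]
      simp
  have hbd := @aux_prod_bound_stmt13 𝓧 Ω _ m (μ.map X) (@Measure.map Ω Ω m0 m id μ)
    inferInstance inferInstance E hEmeas s hs c hsec
  have h2 : (@Measure.map Ω Ω m0 m id μ) s = μ s := by
    rw [@Measure.map_apply Ω Ω m0 m μ id hid s hs, Set.preimage_id]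
  rw [← h2]
  exact hbd

/-- Auxiliary: conditional expectation bound for the small-interval indicator. -/
lemma aux_condG_stmt13 (m : MeasurableSpace Ω) (m0 : MeasurableSpace Ω)
    (hm : m ≤ m0) (μ : Measure Ω) [IsProbabilityMeasure μ]
    (X : Ω → 𝓧) (hX : Measurable X)
    (hindep : Indep (MeasurableSpace.comap X inferInstance) m μ)
    (W : 𝓧 → ℝ) (hW : Measurable W)
    (C δ : ℝ) (hC : 0 ≤ C) (hδ : 0 ≤ δ)
    (hdens : ∀ a : ℝ, μ ((fun ω => W (X ω)) ⁻¹' Set.Ioc a (a + δ)) ≤ ENNReal.ofReal (C * δ))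
    (a : Ω → ℝ) (ha : Measurable[m] a) :
    μ[Set.indicator {ω | W (X ω) ∈ Set.Ioc (a ω) (a ω + δ)} (fun _ => (1:ℝ)) | m]
      ≤ᵐ[μ] fun _ => C * δ := by
  haveI hσ : SigmaFinite (μ.trim hm) := inferInstance
  have ha0 : Measurable a := ha.mono hm le_rfl
  have hWX : Measurable (fun ω => W (X ω)) := hW.comp hX
  set G : Set Ω := {ω | W (X ω) ∈ Set.Ioc (a ω) (a ω + δ)} with hG
  have hGset : MeasurableSet G := by
    have h1 : MeasurableSet {ω | a ω < W (X ω)} := measurableSet_lt ha0 hWX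
    have h2 : MeasurableSet {ω | W (X ω) ≤ a ω + δ} :=
      measurableSet_le hWX (ha0.add measurable_const)
    exact h1.inter h2
  have hint : Integrable (G.indicator fun _ => (1:ℝ)) μ :=
    (integrable_const (1:ℝ)).indicator hGset
  have hsi : ∀ s : Set Ω, MeasurableSet[m] s →
      ∫ ω in s, (G.indicator fun _ => (1:ℝ)) ω ∂μ ≤ (μ s).toReal * (C * δ) := by
    intro s hs
    have h1 : ∫ ω in s, (G.indicator fun _ => (1:ℝ)) ω ∂μ = (μ (s ∩ G)).toReal := by
      rw [setIntegral_indicator hGset, setIntegral_const, smul_eq_mul, mul_one]; rfl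
    rw [h1, Set.inter_comm]
    have hb := aux_key_stmt13 m m0 hm μ X hX hindep W hW (ENNReal.ofReal (C * δ)) δ hdens
      a ha s hs
    have hfin : ENNReal.ofReal (C * δ) * μ s ≠ ⊤ :=
      ENNReal.mul_ne_top ENNReal.ofReal_ne_top (measure_ne_top μ s)
    have h2 : (ENNReal.ofReal (C * δ) * μ s).toReal = (μ s).toReal * (C * δ) := by
      rw [ENNReal.toReal_mul, ENNReal.toReal_ofReal (by positivity)]
      ring
    calc (μ (G ∩ s)).toReal
        ≤ (ENNReal.ofReal (C * δ) * μ s).toReal := ENNReal.toReal_mono hfin hb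
      _ = (μ s).toReal * (C * δ) := h2
  refine ae_le_of_ae_le_trim (hm := hm) ?_
  refine ae_le_of_forall_setIntegral_le (μ := μ.trim hm)
    (integrable_condExp.trim hm stronglyMeasurable_condExp) (integrable_const _) ?_
  intro s hs hμs
  rw [← setIntegral_trim hm stronglyMeasurable_condExp hs,
    setIntegral_condExp hm hint hs]
  have h2 : ∫ _ in s, (C * δ) ∂(μ.trim hm) = ((μ.trim hm) s).toReal * (C * δ) := by
    simp only [setIntegral_const, smul_eq_mul, Measure.real_def]
  rw [h2, trim_measurableSet_eq hm hs]
  exact hsi s hs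

end Aux

/-- Lemma 6 (comparison of conditional exceedance probabilities): let `m ⊆ m0` be a
sub-σ-algebra (the past `ℱ_{k-1}`), `q` an `m`-measurable threshold, `W_k` an
`m`-measurable random function, `X` independent of `m`, and `W` a fixed function such
that `W(X)` has a Lebesgue density bounded by `C`.  Then, almost surely,
`|P(W_k(X) > q | m) - P(W(X) > q | m)| ≤ C δ + P(|W_k(X) - W(X)| > δ | m)` for every
`δ > 0`. -/
theorem stmt_13 {Ω 𝓧 : Type*} (m : MeasurableSpace Ω) {m0 : MeasurableSpace Ω} [MeasurableSpace 𝓧]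
    (μ : Measure Ω) [IsProbabilityMeasure μ]
    (hm : m ≤ m0)
    (X : Ω → 𝓧) (hX : Measurable X)
    (hindep : Indep (MeasurableSpace.comap X inferInstance) m μ)
    (q : Ω → ℝ) (hq : Measurable[m] q)
    (Wk : Ω → 𝓧 → ℝ)
    (hWk : @Measurable (Ω × 𝓧) ℝ (m.prod inferInstance) _ (fun p => Wk p.1 p.2))
    (W : 𝓧 → ℝ) (hW : Measurable W)
    (C : ℝ) (hC : 0 < C)
    (hdens : ∀ a b : ℝ, a ≤ b →
      (@Measure.map Ω ℝ m0 _ (fun ω => W (X ω)) μ) (Set.Ioc a b) ≤ ENNReal.ofReal (C * (b - a)))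
    (δ : ℝ) (hδ : 0 < δ) :
    ∀ᵐ ω ∂μ,
      |(μ[fun ω' => if q ω' < Wk ω' (X ω') then (1:ℝ) else 0 | m]) ω -
          (μ[fun ω' => if q ω' < W (X ω') then (1:ℝ) else 0 | m]) ω| ≤
        C * δ + (μ[fun ω' => if δ < |Wk ω' (X ω') - W (X ω')| then (1:ℝ) else 0 | m]) ω := by
  haveI hσ : SigmaFinite (μ.trim hm) := inferInstance
  have hX0 : Measurable[m0] X := hX
  have hq0 : Measurable[m0] q := hq.mono hm le_rfl
  have hid : @Measurable Ω Ω m0 m id := measurable_id'' hm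
  have hpair : @Measurable Ω (Ω × 𝓧) m0 (m.prod inferInstance) (fun ω => (ω, X ω)) :=
    Measurable.prodMk hid hX0
  have hg : Measurable[m0] (fun ω => Wk ω (X ω)) := hWk.comp hpair
  have hWX : Measurable[m0] (fun ω => W (X ω)) := hW.comp hX0
  have hdens' : ∀ a : ℝ,
      μ ((fun ω => W (X ω)) ⁻¹' Set.Ioc a (a + δ)) ≤ ENNReal.ofReal (C * δ) := by
    intro a
    have h := hdens a (a + δ) (by linarith)
    rw [@Measure.map_apply Ω ℝ m0 _ μ (fun ω => W (X ω)) hWX _ measurableSet_Ioc] at h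
    calc μ ((fun ω => W (X ω)) ⁻¹' Set.Ioc a (a + δ))
        ≤ ENNReal.ofReal (C * (a + δ - a)) := h
      _ = ENNReal.ofReal (C * δ) := by ring_nf
  have indint : ∀ S : Set Ω, MeasurableSet[m0] S →
      Integrable (S.indicator fun _ => (1:ℝ)) μ :=
    fun S hS => aux_indint_stmt13 (m0 := m0) μ S hS
  -- the indicator functions appearing in the statement
  set fA : Ω → ℝ := fun ω' => if q ω' < Wk ω' (X ω') then (1:ℝ) else 0 with hfA
  set fB : Ω → ℝ := fun ω' => if q ω' < W (X ω') then (1:ℝ) else 0 with hfB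
  set fD : Ω → ℝ := fun ω' => if δ < |Wk ω' (X ω') - W (X ω')| then (1:ℝ) else 0 with hfD
  set G1 : Set Ω := {ω | W (X ω) ∈ Set.Ioc ((fun ω' => q ω' - δ) ω)
    ((fun ω' => q ω' - δ) ω + δ)} with hG1
  set G2 : Set Ω := {ω | W (X ω) ∈ Set.Ioc (q ω) (q ω + δ)} with hG2
  set fG1 : Ω → ℝ := G1.indicator (fun _ => (1:ℝ)) with hfG1
  set fG2 : Ω → ℝ := G2.indicator (fun _ => (1:ℝ)) with hfG2
  have mA : MeasurableSet[m0] {ω | q ω < Wk ω (X ω)} := measurableSet_lt hq0 hg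
  have mB : MeasurableSet[m0] {ω | q ω < W (X ω)} := measurableSet_lt hq0 hWX
  have habs : Measurable[m0] (fun ω => |Wk ω (X ω) - W (X ω)|) :=
    measurable_abs.comp (hg.sub hWX)
  have mD : MeasurableSet[m0] {ω | δ < |Wk ω (X ω) - W (X ω)|} :=
    measurableSet_lt (measurable_const : Measurable[m0] (fun _ : Ω => δ)) habs
  have mG1 : MeasurableSet[m0] G1 := by
    have h1 : MeasurableSet[m0] {ω | q ω - δ < W (X ω)} :=
      measurableSet_lt (hq0.sub (measurable_const : Measurable[m0] (fun _ : Ω => δ))) hWX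
    have h2 : MeasurableSet[m0] {ω | W (X ω) ≤ q ω - δ + δ} :=
      measurableSet_le hWX ((hq0.sub
        (measurable_const : Measurable[m0] (fun _ : Ω => δ))).add
        (measurable_const : Measurable[m0] (fun _ : Ω => δ)))
    exact h1.inter h2
  have mG2 : MeasurableSet[m0] G2 := by
    have h1 : MeasurableSet[m0] {ω | q ω < W (X ω)} := measurableSet_lt hq0 hWX
    have h2 : MeasurableSet[m0] {ω | W (X ω) ≤ q ω + δ} :=
      measurableSet_le hWX (hq0.add (measurable_const : Measurable[m0] (fun _ : Ω => δ)))
    exact h1.inter h2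
  have eqA : fA = Set.indicator {ω | q ω < Wk ω (X ω)} (fun _ => (1:ℝ)) := by
    ext ω; by_cases h : q ω < Wk ω (X ω) <;> simp [hfA, Set.indicator_apply, h]
  have eqB : fB = Set.indicator {ω | q ω < W (X ω)} (fun _ => (1:ℝ)) := by
    ext ω; by_cases h : q ω < W (X ω) <;> simp [hfB, Set.indicator_apply, h]
  have eqD : fD = Set.indicator {ω | δ < |Wk ω (X ω) - W (X ω)|} (fun _ => (1:ℝ)) := by
    ext ω; by_cases h : δ < |Wk ω (X ω) - W (X ω)| <;> simp [hfD, Set.indicator_apply, h]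
  have intA : Integrable fA μ := by rw [eqA]; exact indint _ mA
  have intB : Integrable fB μ := by rw [eqB]; exact indint _ mB
  have intD : Integrable fD μ := by rw [eqD]; exact indint _ mD
  have intG1 : Integrable fG1 μ := indint _ mG1
  have intG2 : Integrable fG2 μ := indint _ mG2
  -- elementary bounds on indicator values
  have hA01 : ∀ ω, 0 ≤ fA ω ∧ fA ω ≤ 1 := by
    intro ω; simp only [hfA]; constructor <;> (split <;> norm_num)
  have hB01 : ∀ ω, 0 ≤ fB ω ∧ fB ω ≤ 1 := by
    intro ω; simp only [hfB]; constructor <;> (split <;> norm_num)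
  have hD01 : ∀ ω, 0 ≤ fD ω ∧ fD ω ≤ 1 := by
    intro ω; simp only [hfD]; constructor <;> (split <;> norm_num)
  have hG101 : ∀ ω, 0 ≤ fG1 ω := fun ω =>
    Set.indicator_nonneg (fun _ _ => by norm_num) ω
  have hG201 : ∀ ω, 0 ≤ fG2 ω := fun ω =>
    Set.indicator_nonneg (fun _ _ => by norm_num) ω
  -- pointwise inequalities
  have hpt1 : ∀ ω, fA ω - fB ω ≤ fG1 ω + fD ω := by
    intro ω
    by_cases hD : δ < |Wk ω (X ω) - W (X ω)|
    · have hDv : fD ω = 1 := by simp only [hfD]; exact if_pos hD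
      have := (hA01 ω).2; have := (hB01 ω).1; have := hG101 ω
      linarith
    · push_neg at hD
      have habs := abs_le.mp hD
      by_cases hA : q ω < Wk ω (X ω)
      · by_cases hB : q ω < W (X ω)
        · have hBv : fB ω = 1 := by simp only [hfB]; exact if_pos hB
          have := (hA01 ω).2; have := hG101 ω; have := (hD01 ω).1
          linarith
        · push_neg at hB
          have hmem : ω ∈ G1 := by
            simp only [hG1, Set.mem_setOf_eq, Set.mem_Ioc]
            constructor
            · linarith [habs.2]
            · linarith
          have hG1v : fG1 ω = 1 := by
            simp only [hfG1]; exact Set.indicator_of_mem hmem _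
          have := (hA01 ω).2; have := (hB01 ω).1; have := (hD01 ω).1
          linarith
      · have hAv : fA ω = 0 := by simp only [hfA]; exact if_neg hA
        have := (hB01 ω).1; have := hG101 ω; have := (hD01 ω).1
        linarith
  have hpt2 : ∀ ω, fB ω - fA ω ≤ fG2 ω + fD ω := by
    intro ω
    by_cases hD : δ < |Wk ω (X ω) - W (X ω)|
    · have hDv : fD ω = 1 := by simp only [hfD]; exact if_pos hD
      have := (hB01 ω).2; have := (hA01 ω).1; have := hG201 ω
      linarith
    · push_neg at hD
      have habs := abs_le.mp hD
      by_cases hB : q ω < W (X ω)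
      · by_cases hA : q ω < Wk ω (X ω)
        · have hAv : fA ω = 1 := by simp only [hfA]; exact if_pos hA
          have := (hB01 ω).2; have := hG201 ω; have := (hD01 ω).1
          linarith
        · push_neg at hA
          have hmem : ω ∈ G2 := by
            simp only [hG2, Set.mem_setOf_eq, Set.mem_Ioc]
            exact ⟨hB, by linarith [habs.1]⟩
          have hG2v : fG2 ω = 1 := by
            simp only [hfG2]; exact Set.indicator_of_mem hmem _
          have := (hB01 ω).2; have := (hA01 ω).1; have := (hD01 ω).1
          linarith
      · have hBv : fB ω = 0 := by simp only [hfB]; exact if_neg hB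
        have := (hA01 ω).1; have := hG201 ω; have := (hD01 ω).1
        linarith
  -- conditional expectation inequalities
  have hmono1 : μ[fA - fB | m] ≤ᵐ[μ] μ[fG1 + fD | m] :=
    condExp_mono (intA.sub intB) (intG1.add intD)
      (Filter.Eventually.of_forall (fun ω => by
        simpa [Pi.sub_apply, Pi.add_apply] using hpt1 ω))
  have hmono2 : μ[fB - fA | m] ≤ᵐ[μ] μ[fG2 + fD | m] :=
    condExp_mono (intB.sub intA) (intG2.add intD)
      (Filter.Eventually.of_forall (fun ω => by
        simpa [Pi.sub_apply, Pi.add_apply] using hpt2 ω))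
  have hsub1 := condExp_sub intA intB (m := m)
  have hsub2 := condExp_sub intB intA (m := m)
  have hadd1 := condExp_add intG1 intD (m := m)
  have hadd2 := condExp_add intG2 intD (m := m)
  have hbound1 : μ[fG1 | m] ≤ᵐ[μ] fun _ => C * δ :=
    aux_condG_stmt13 m m0 hm μ X hX0 hindep W hW C δ hC.le hδ.le hdens'
      (fun ω' => q ω' - δ) (hq.sub (measurable_const : Measurable[m] (fun _ : Ω => δ)))
  have hbound2 : μ[fG2 | m] ≤ᵐ[μ] fun _ => C * δ :=
    aux_condG_stmt13 m m0 hm μ X hX0 hindep W hW C δ hC.le hδ.le hdens' q hq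
  filter_upwards [hmono1, hmono2, hsub1, hsub2, hadd1, hadd2, hbound1, hbound2] with ω
    h1 h2 hs1 hs2 ha1 ha2 hb1 hb2
  rw [hs1, ha1] at h1
  rw [hs2, ha2] at h2
  simp only [Pi.sub_apply, Pi.add_apply] at h1 h2
  rw [abs_sub_le_iff]
  constructor <;> linarith
end

section
/- Let (X_t, Y_t) be iid in X × [K] with class probabilities V̄(x,y) = P(Y = y | X = x), and W(x) = max_y V̄(x,y). Fix α ∈ (0,1) with 1 − B* < α < 1 − E[W(X)], where W(X) has continuous positive density on (κ, B*) ⊂ [1/K, 1], and let q⁰_α ∈ (κ, 1−α) solve E[W(X) | W(X) > q⁰_α] = 1 − α. Define the oracle procedure by Y*(x) = argmax_y V̄(x,y) and S*(x) = 1{W(x) > q⁰_α}. Then for any selective classifier (S(x), Ŷ(x)) (measurable functions with values in {0,1} and [K] respectively) satisfying P(Y ≠ Ŷ(X) | S(X) = 1) ≤ α + z for some z ≥ 0, one has E[1{Y = Ŷ(X)}·S(X)] ≤ E[1{Y = Y*(X)}·S*(X)] + z·q⁰_α/(1 − α − q⁰_α). -/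
open MeasureTheory

theorem ind_int' {Ω : Type*} [MeasurableSpace Ω] (μ : Measure Ω) [IsFiniteMeasure μ]
    (p : Ω → Prop) [DecidablePred p] (hp : MeasurableSet {ω | p ω}) :
    ∫ ω, (if p ω then (1:ℝ) else 0) ∂μ = (μ {ω | p ω}).toReal := by
  have : (fun ω => if p ω then (1:ℝ) else 0) = Set.indicator {ω | p ω} (fun _ => 1) := by
    funext ω; by_cases h : p ω <;> simp [Set.indicator_apply, h]
  rw [this, integral_indicator_const _ hp]; simp; rfl

set_option maxHeartbeats 1000000 in
/-- Proposition 3 (quantitative optimality of the thresholded-confidence oracle for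
selective classification): with `V̄(x,y) = P(Y = y | X = x)`, `W(x) = max_y V̄(x,y)`,
`Y*(x)` the argmax and `S*(x) = 1{W(x) > q⁰_α}` where `E[W(X) | W(X) > q⁰_α] = 1 - α`,
any selective classifier `(Ŝ, Ŷ)` with
`P(Y ≠ Ŷ(X) | Ŝ(X) = 1) ≤ α + z` satisfies
`E[1{Y = Ŷ(X)} Ŝ(X)] ≤ E[1{Y = Y*(X)} S*(X)] + z q⁰_α/(1 - α - q⁰_α)`. -/
theorem stmt_19 {Ω 𝓧 : Type*} [MeasurableSpace Ω] [MeasurableSpace 𝓧]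
    (μ : Measure Ω) [IsProbabilityMeasure μ]
    (K : ℕ) (hK : 1 ≤ K)
    (X : Ω → 𝓧) (hX : Measurable X)
    (Y : Ω → Fin K) (hY : Measurable Y)
    (Vbar : 𝓧 → Fin K → ℝ) (hVbarmeas : ∀ y, Measurable (fun x => Vbar x y))
    (hVbar01 : ∀ x y, Vbar x y ∈ Set.Icc (0:ℝ) 1)
    -- `V̄` encodes the conditional class probabilities given `X`:
    (hcond : ∀ (S : 𝓧 → ℝ) (Yhat : 𝓧 → Fin K), Measurable S → Measurable Yhat →
      (∀ x, S x = 0 ∨ S x = 1) →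
      ∫ ω, (if Y ω = Yhat (X ω) then (1:ℝ) else 0) * S (X ω) ∂μ =
        ∫ ω, Vbar (X ω) (Yhat (X ω)) * S (X ω) ∂μ)
    (W : 𝓧 → ℝ) (hWmeas : Measurable W)
    (hW : ∀ x, IsGreatest (Set.range (Vbar x)) (W x))
    (Ystar : 𝓧 → Fin K) (hYstarmeas : Measurable Ystar)
    (hYstar : ∀ x, Vbar x (Ystar x) = W x)
    (κ Bstar : ℝ) (α : ℝ) (hα : α ∈ Set.Ioo (0:ℝ) 1)
    (hαlow : 1 - Bstar < α) (hαhigh : α < 1 - ∫ ω, W (X ω) ∂μ)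
    (q0 : ℝ) (hq0 : q0 ∈ Set.Ioo κ (1 - α)) (hq0pos : 0 < q0)
    -- `q⁰_α` solves `E[W(X) | W(X) > q⁰_α] = 1 - α`:
    (hq0sol : ∫ ω, W (X ω) * (if q0 < W (X ω) then (1:ℝ) else 0) ∂μ =
      (1 - α) * (μ {ω | q0 < W (X ω)}).toReal)
    (Shat : 𝓧 → ℝ) (Yhat : 𝓧 → Fin K)
    (hShatmeas : Measurable Shat) (hYhatmeas : Measurable Yhat)
    (hShatval : ∀ x, Shat x = 0 ∨ Shat x = 1)
    (z : ℝ) (hz : 0 ≤ z)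
    (hIER : (μ {ω | Y ω ≠ Yhat (X ω) ∧ Shat (X ω) = 1}).toReal ≤
      (α + z) * (μ {ω | Shat (X ω) = 1}).toReal) :
    ∫ ω, (if Y ω = Yhat (X ω) then (1:ℝ) else 0) * Shat (X ω) ∂μ ≤
      (∫ ω, (if Y ω = Ystar (X ω) then (1:ℝ) else 0) *
          (if q0 < W (X ω) then (1:ℝ) else 0) ∂μ) +
        z * q0 / (1 - α - q0) := by
  classical
  have hW01 : ∀ x, W x ∈ Set.Icc (0:ℝ) 1 := by
    intro x; rw [← hYstar x]; exact hVbar01 x (Ystar x)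
  have hS01 : ∀ x, 0 ≤ Shat x ∧ Shat x ≤ 1 := by
    intro x; rcases hShatval x with h | h <;> simp [h]
  set c : ℝ := (1 - α - q0) / q0 with hc
  have hq0lt : q0 < 1 - α := hq0.2
  have hcpos : 0 < c := div_pos (by linarith) hq0pos
  have hcq : (1 + c) * q0 = 1 - α := by
    rw [hc, add_mul, div_mul_cancel₀ _ hq0pos.ne']; ring
  -- measurability
  have hsetS : MeasurableSet {ω | Shat (X ω) = 1} :=
    (hShatmeas.comp hX) (measurableSet_singleton 1)
  have hsetW : MeasurableSet {ω | q0 < W (X ω)} :=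
    (hWmeas.comp hX) measurableSet_Ioi
  have hsetE : MeasurableSet {ω | Y ω = Yhat (X ω)} :=
    measurableSet_eq_fun hY (hYhatmeas.comp hX)
  have hmInd : Measurable (fun ω => if q0 < W (X ω) then (1:ℝ) else 0) :=
    Measurable.ite hsetW measurable_const measurable_const
  have hmEq : Measurable (fun ω => if Y ω = Yhat (X ω) then (1:ℝ) else 0) :=
    Measurable.ite hsetE measurable_const measurable_const
  -- integrability helper
  have hint : ∀ (g : Ω → ℝ), Measurable g → (∀ ω, |g ω| ≤ 1) → Integrable g μ := fun g hg hb =>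
    (integrable_const (1:ℝ)).mono' hg.aestronglyMeasurable (ae_of_all _ fun ω => by simpa using hb ω)
  have habs : ∀ r : ℝ, 0 ≤ r → r ≤ 1 → |r| ≤ 1 := fun r h0 h1 => abs_le.2 ⟨by linarith, h1⟩
  have hindB : ∀ ω, 0 ≤ (if q0 < W (X ω) then (1:ℝ) else 0) ∧
      (if q0 < W (X ω) then (1:ℝ) else 0) ≤ 1 := by
    intro ω; by_cases h : q0 < W (X ω) <;> simp [h]
  have iShat : Integrable (fun ω => Shat (X ω)) μ :=
    hint _ (hShatmeas.comp hX) (fun ω => habs _ (hS01 (X ω)).1 (hS01 (X ω)).2)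
  have iInd : Integrable (fun ω => if q0 < W (X ω) then (1:ℝ) else 0) μ :=
    hint _ hmInd (fun ω => habs _ (hindB ω).1 (hindB ω).2)
  have iWShat : Integrable (fun ω => W (X ω) * Shat (X ω)) μ :=
    hint _ ((hWmeas.comp hX).mul (hShatmeas.comp hX)) (fun ω => habs _
      (mul_nonneg (hW01 (X ω)).1 (hS01 (X ω)).1)
      (mul_le_one₀ (hW01 (X ω)).2 (hS01 (X ω)).1 (hS01 (X ω)).2))
  have iWInd : Integrable (fun ω => W (X ω) * (if q0 < W (X ω) then (1:ℝ) else 0)) μ :=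
    hint _ ((hWmeas.comp hX).mul hmInd) (fun ω => habs _
      (mul_nonneg (hW01 (X ω)).1 (hindB ω).1)
      (mul_le_one₀ (hW01 (X ω)).2 (hindB ω).1 (hindB ω).2))
  have iEqShat : Integrable (fun ω => (if Y ω = Yhat (X ω) then (1:ℝ) else 0) * Shat (X ω)) μ :=
    hint _ (hmEq.mul (hShatmeas.comp hX)) (fun ω => by
      by_cases h : Y ω = Yhat (X ω) <;>
        simp [h, habs _ (hS01 (X ω)).1 (hS01 (X ω)).2, abs_mul])
  -- abbreviations
  set a : ℝ := ∫ ω, Shat (X ω) ∂μ with ha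
  set A : ℝ := ∫ ω, (if Y ω = Yhat (X ω) then (1:ℝ) else 0) * Shat (X ω) ∂μ with hA
  set w : ℝ := ∫ ω, W (X ω) * Shat (X ω) ∂μ with hw
  set ast : ℝ := ∫ ω, (if q0 < W (X ω) then (1:ℝ) else 0) ∂μ with hast
  set wst : ℝ := ∫ ω, W (X ω) * (if q0 < W (X ω) then (1:ℝ) else 0) ∂μ with hwst
  -- the oracle value equals wst
  have hOracle : ∫ ω, (if Y ω = Ystar (X ω) then (1:ℝ) else 0) *
      (if q0 < W (X ω) then (1:ℝ) else 0) ∂μ = wst := by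
    have h1 := hcond (fun x => if q0 < W x then (1:ℝ) else 0) Ystar
      (Measurable.ite (hWmeas measurableSet_Ioi) measurable_const measurable_const)
      hYstarmeas (fun x => by by_cases h : q0 < W x <;> simp [h])
    rw [h1, hwst]
    congr 1; funext ω; rw [hYstar]
  -- a = μ {Shat = 1}
  have haMeas : a = (μ {ω | Shat (X ω) = 1}).toReal := by
    rw [ha, ← ind_int' μ (fun ω => Shat (X ω) = 1) hsetS]
    congr 1; funext ω
    rcases hShatval (X ω) with h | h <;> simp [h]
  -- ast = μ {q0 < W}
  have hastMeas : ast = (μ {ω | q0 < W (X ω)}).toReal := by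
    rw [hast, ← ind_int' μ (fun ω => q0 < W (X ω)) hsetW]
  -- wst = (1-α) * ast
  have hF3 : wst = (1 - α) * ast := by rw [hastMeas]; exact hq0sol
  -- A ≤ w
  have hAcond := hcond Shat Yhat hShatmeas hYhatmeas hShatval
  have hF1 : A ≤ w := by
    rw [hA, hAcond]
    apply integral_mono _ iWShat
    · intro ω
      exact mul_le_mul_of_nonneg_right ((hW (X ω)).2 (Set.mem_range_self _)) (hS01 (X ω)).1
    · have hmV : Measurable (fun x => Vbar x (Yhat x)) := by
        have heq : (fun x => Vbar x (Yhat x)) =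
            fun x => ∑ y : Fin K, if Yhat x = y then Vbar x y else 0 := by
          funext x; simp [Finset.sum_ite_eq]
        rw [heq]
        exact Finset.measurable_sum _ fun y _ =>
          Measurable.ite (hYhatmeas (measurableSet_singleton y)) (hVbarmeas y) measurable_const
      refine hint _ ((hmV.comp hX).mul (hShatmeas.comp hX)) fun ω => habs _
        (mul_nonneg (hVbar01 _ _).1 (hS01 (X ω)).1)
        (mul_le_one₀ (hVbar01 _ _).2 (hS01 (X ω)).1 (hS01 (X ω)).2)
  -- error constraint: a - A ≤ (α + z) * a
  have hErrMeas : (μ {ω | Y ω ≠ Yhat (X ω) ∧ Shat (X ω) = 1}).toReal = a - A := by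
    have hset : MeasurableSet {ω | Y ω ≠ Yhat (X ω) ∧ Shat (X ω) = 1} := by
      exact (hsetE.compl).inter hsetS
    rw [← ind_int' μ (fun ω => Y ω ≠ Yhat (X ω) ∧ Shat (X ω) = 1) hset]
    have : (fun ω => if Y ω ≠ Yhat (X ω) ∧ Shat (X ω) = 1 then (1:ℝ) else 0) =
        fun ω => Shat (X ω) - (if Y ω = Yhat (X ω) then (1:ℝ) else 0) * Shat (X ω) := by
      funext ω
      rcases hShatval (X ω) with h | h <;> by_cases he : Y ω = Yhat (X ω) <;> simp [h, he]
    rw [this, integral_sub iShat iEqShat]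
  have hF2 : a - A ≤ (α + z) * a := by rw [haMeas]; rw [hErrMeas, haMeas] at hIER; exact hIER
  -- 0 ≤ a ≤ 1
  have ha0 : 0 ≤ a := by rw [haMeas]; positivity
  have ha1 : a ≤ 1 := by
    rw [haMeas]
    exact ENNReal.toReal_le_of_le_ofReal one_pos.le (by simpa using prob_le_one)
  -- pointwise inequality and its integral
  have hptw : ∀ ω, ((1 - α) - (1 + c) * W (X ω)) *
      ((if q0 < W (X ω) then (1:ℝ) else 0) - Shat (X ω)) ≤ 0 := by
    intro ω
    by_cases h : q0 < W (X ω)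
    · have h1 : (1 - α) - (1 + c) * W (X ω) ≤ 0 := by nlinarith [(hW01 (X ω)).2]
      have h2 : (0:ℝ) ≤ (if q0 < W (X ω) then (1:ℝ) else 0) - Shat (X ω) := by
        simp only [h, if_true]; linarith [(hS01 (X ω)).2]
      exact mul_nonpos_iff.2 (Or.inr ⟨h1, h2⟩)
    · have h1 : (0:ℝ) ≤ (1 - α) - (1 + c) * W (X ω) := by
        push_neg at h; nlinarith
      have h2 : (if q0 < W (X ω) then (1:ℝ) else 0) - Shat (X ω) ≤ 0 := by
        simp only [h, if_false]; linarith [(hS01 (X ω)).1]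
      exact mul_nonpos_iff.2 (Or.inl ⟨h1, h2⟩)
  have hIntNonpos : ∫ ω, ((1 - α) - (1 + c) * W (X ω)) *
      ((if q0 < W (X ω) then (1:ℝ) else 0) - Shat (X ω)) ∂μ ≤ 0 :=
    integral_nonpos hptw
  have hexp : (fun ω => ((1 - α) - (1 + c) * W (X ω)) *
      ((if q0 < W (X ω) then (1:ℝ) else 0) - Shat (X ω))) =
      fun ω => ((1 - α) * (if q0 < W (X ω) then (1:ℝ) else 0) - (1 - α) * Shat (X ω)) -
        ((1 + c) * (W (X ω) * (if q0 < W (X ω) then (1:ℝ) else 0)) -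
          (1 + c) * (W (X ω) * Shat (X ω))) := by
    funext ω; ring
  have i1 : Integrable (fun ω => (1 - α) * (if q0 < W (X ω) then (1:ℝ) else 0) -
      (1 - α) * Shat (X ω)) μ := (iInd.const_mul _).sub (iShat.const_mul _)
  have i2 : Integrable (fun ω => (1 + c) * (W (X ω) * (if q0 < W (X ω) then (1:ℝ) else 0)) -
      (1 + c) * (W (X ω) * Shat (X ω))) μ := (iWInd.const_mul _).sub (iWShat.const_mul _)
  have hF4 : (1 - α) * ast - (1 - α) * a - ((1 + c) * wst - (1 + c) * w) ≤ 0 := by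
    rw [hexp] at hIntNonpos
    rwa [integral_sub i1 i2,
      integral_sub (iInd.const_mul _) (iShat.const_mul _),
      integral_sub (iWInd.const_mul _) (iWShat.const_mul _),
      integral_const_mul, integral_const_mul, integral_const_mul, integral_const_mul]
      at hIntNonpos
  -- combine
  have hza : z * a ≤ z := by nlinarith
  have h5 : (1 + c) * w ≤ (1 - α) * a + c * wst := by
    rw [hF3] at hF4 ⊢
    ring_nf at hF4 ⊢
    linarith
  have key : c * w ≤ z + c * wst := by
    ring_nf at hF2 h5 hza ⊢
    linarith [hF1, hza]
  have hzc : z * q0 / (1 - α - q0) = z / c := by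
    rw [hc, div_div_eq_mul_div]
  rw [hOracle, hzc]
  have : w ≤ wst + z / c := by
    rw [← sub_le_iff_le_add', le_div_iff₀ hcpos]
    ring_nf at key ⊢
    linarith
  linarith [hF1]
end
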